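/- arXiv:1211.4319 — 3 statements merged into one kernel-verified Lean document; each statement's English description precedes it below -/
import Mathlib

section
/- Generalized discrete Hardy inequality. Let {a_k}_{k∈ℤ_+^d} and {b_k}_{k∈ℤ_+^d} be positive sequences such that for some A > 0, τ > 0 and δ > 0: b_k ≤ A ( Σ_{s∈ℤ_+^d} ( 2^{−δ|(k−s)_+|_1} a_s )^τ )^{1/τ} for all k ∈ ℤ_+^d. Let ψ: ℤ_+^d → ℝ satisfy: there are numbers c_1, c_2 ∈ ℝ, ε > 0 and 0 < ζ < δ such that ψ(k) − ε|k|_1 ≤ ψ(k') − ε|k'|_1 + c_1 and ψ(k) − ζ|k|_1 ≥ ψ(k') − ζ|k'|_1 + c_2 whenever k ≤ k' in ℤ_+^d. Then for every 0 < θ ≤ ∞ one has ‖{b_k}‖_{b_θ^ψ} ≤ C A ‖{a_k}‖_{b_θ^ψ}, where C = C(c_1, c_2, ε, ζ, δ, θ, d) > 0. -/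
open MeasureTheory Filter
open scoped ENNReal Classical BigOperators

noncomputable section

namespace SparseGrid

/-- The unit cube `[0,1]^d`. -/
def cube (d : ℕ) : Set (Fin d → ℝ) := Set.univ.pi fun _ => Set.Icc (0:ℝ) 1

/-- The `L_p` quasi-norm on the unit cube. -/
def lpQ (d : ℕ) (p : ℝ≥0∞) (f : (Fin d → ℝ) → ℝ) : ℝ≥0∞ :=
  eLpNorm f p (volume.restrict (cube d))

/-- Univariate `r`-th difference applied in coordinate `i`. -/
def diffC (d r : ℕ) (i : Fin d) (h : ℝ) (f : (Fin d → ℝ) → ℝ) (x : Fin d → ℝ) : ℝ :=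
  ∑ j ∈ Finset.range (r + 1),
    (-1 : ℝ) ^ (r - j) * (r.choose j : ℝ) * f (Function.update x i (x i + j * h))

/-- The mixed `(r,e)`-th difference operator. -/
def mixDiff (d r : ℕ) (e : Finset (Fin d)) (h : Fin d → ℝ) (f : (Fin d → ℝ) → ℝ) :
    (Fin d → ℝ) → ℝ :=
  e.toList.foldr (fun i g => diffC d r i (h i) g) f

/-- The set `𝕀^d(h,e)`. -/
def cubeHE (d r : ℕ) (h : Fin d → ℝ) (e : Finset (Fin d)) : Set (Fin d → ℝ) :=
  {x | x ∈ cube d ∧ ∀ i ∈ e, x i + r * h i ∈ Set.Icc (0:ℝ) 1}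

/-- The mixed `(r,e)`-th modulus of smoothness in `L_p`. -/
def modulus (d r : ℕ) (e : Finset (Fin d)) (p : ℝ≥0∞) (f : (Fin d → ℝ) → ℝ)
    (t : Fin d → ℝ) : ℝ≥0∞ :=
  ⨆ (h : Fin d → ℝ) (_ : ∀ i ∈ e, |h i| < t i),
    eLpNorm (mixDiff d r e h f) p (volume.restrict (cubeHE d r h e))

/-- `t^e`. -/
def tE (d : ℕ) (e : Finset (Fin d)) (t : Fin d → ℝ) : Fin d → ℝ :=
  fun i => if i ∈ e then t i else 1

/-- The Besov-type quasi-seminorm `|f|_{B^Ω_{p,θ}(e)}`. -/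
def besovSemi (d r : ℕ) (p θ : ℝ≥0∞) (Ω : (Fin d → ℝ) → ℝ) (e : Finset (Fin d))
    (f : (Fin d → ℝ) → ℝ) : ℝ≥0∞ :=
  if θ = ∞ then
    ⨆ (t : Fin d → ℝ) (_ : t ∈ cube d),
      modulus d r e p f t / ENNReal.ofReal (Ω (tE d e t))
  else
    (∫⁻ t in cube d,
        (modulus d r e p f t / ENNReal.ofReal (Ω (tE d e t))) ^ θ.toReal *
          ∏ i ∈ e, ENNReal.ofReal (t i)⁻¹) ^ (1 / θ.toReal)

/-- The Besov-type quasi-norm `‖f‖_{B^Ω_{p,θ}}`. -/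
def besovNorm (d r : ℕ) (p θ : ℝ≥0∞) (Ω : (Fin d → ℝ) → ℝ)
    (f : (Fin d → ℝ) → ℝ) : ℝ≥0∞ :=
  ∑ e : Finset (Fin d), besovSemi d r p θ Ω e f

/-- The dyadic vector `2^{-k}`. -/
def dyadic (d : ℕ) (k : Fin d → ℕ) : Fin d → ℝ := fun i => ((2:ℝ) ^ (k i))⁻¹

/-- `|k|_1`. -/
def knorm1 (d : ℕ) (k : Fin d → ℕ) : ℝ := ∑ i, (k i : ℝ)

/-- `|k|_∞`. -/
def knormInf (d : ℕ) (k : Fin d → ℕ) : ℝ := ((Finset.univ.sup k : ℕ) : ℝ)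

/-- `Ω(t) = ∏ t_i^{a_i}` (mixed smoothness `a`). -/
def OmegaA (d : ℕ) (a : Fin d → ℝ) (t : Fin d → ℝ) : ℝ := ∏ i, t i ^ a i

/-- `Ω(t) = ∏ t_i^α · inf_j t_j^β` (β ≥ 0), resp. `∏ t_i^α · sup_j t_j^β` (β < 0). -/
def OmegaAB (d : ℕ) (α β : ℝ) (t : Fin d → ℝ) : ℝ :=
  if 0 ≤ β then (∏ i, t i ^ α) * ⨅ j, t j ^ β
  else (∏ i, t i ^ α) * ⨆ j, t j ^ β

/-- The centered cardinal B-spline of order `r` (`r`-fold convolution of the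
indicator of `[-1/2,1/2]`). -/
def centerB : ℕ → ℝ → ℝ
  | 0, _ => 0
  | 1, x => if -(1/2 : ℝ) ≤ x ∧ x < 1/2 then 1 else 0
  | (n + 2), x => ∫ y in (-(1/2) : ℝ)..(1/2 : ℝ), centerB (n + 1) (x - y)

/-- The `d`-variate B-spline `M^{(r)}_{k,s}` (integer translated dilations if `r` is even,
half-integer if `r` is odd). -/
def Mrks (d r : ℕ) (k : Fin d → ℕ) (s : Fin d → ℤ) (x : Fin d → ℝ) : ℝ :=
  ∏ i, centerB r ((2:ℝ) ^ (k i) * x i - (if Even r then (s i : ℝ) else (s i : ℝ) / 2))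

/-- `J_r^d(k)`: the set of `s` for which `M^{(r)}_{k,s}` does not vanish identically
on the cube. -/
def Jrd (d r : ℕ) (k : Fin d → ℕ) : Set (Fin d → ℤ) :=
  {s | ¬ ∀ x ∈ cube d, Mrks d r k s x = 0}

/-- `Σ_r^d(k)`: the span of the B-splines `M^{(r)}_{k,s}`, `s ∈ J_r^d(k)`. -/
def SigmaRd (d r : ℕ) (k : Fin d → ℕ) : Submodule ℝ ((Fin d → ℝ) → ℝ) :=
  Submodule.span ℝ (Mrks d r k '' Jrd d r k)

/-- The quasi-interpolation operator `Q(f,x) = ∑_s Λ(f,s) M(x-s)` on `ℝ`. -/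
def Qop (r m : ℕ) (lam : ℤ → ℝ) (f : ℝ → ℝ) (x : ℝ) : ℝ :=
  ∑' s : ℤ,
    (∑ j ∈ Finset.Icc (-(m:ℤ)) (m:ℤ), lam j * f ((s - j : ℤ) : ℝ)) * centerB r (x - (s:ℝ))

/-- `Q` is a quasi-interpolation operator: `lam` is even, supported in `|j| ≤ m`,
`m ≥ r/2 - 1`, and `Q` reproduces polynomials of degree at most `r-1`. -/
def QuasiInterp (r m : ℕ) (lam : ℤ → ℝ) : Prop :=
  (∀ j : ℤ, lam (-j) = lam j) ∧
  (∀ j : ℤ, (m : ℤ) < |j| → lam j = 0) ∧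
  ((r : ℝ) / 2 - 1 ≤ m) ∧
  (∀ P : Polynomial ℝ, P.natDegree < r →
    ∀ x : ℝ, Qop r m lam (fun y => Polynomial.eval y P) x = Polynomial.eval x P)

/-- The Lagrange extension `f̄_k` of a function on `[0,1]` to `ℝ`. -/
def extendF (r k : ℕ) (f : ℝ → ℝ) (x : ℝ) : ℝ :=
  if x < 0 then
    Polynomial.eval x (Lagrange.interpolate (Finset.range r) (fun j => (j : ℝ) / 2 ^ k)
      (fun j => f ((j : ℝ) / 2 ^ k)))
  else if x ≤ 1 then f x
  else
    Polynomial.eval x (Lagrange.interpolate (Finset.range r)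
      (fun j => ((2 ^ k : ℝ) - r + 1 + j) / 2 ^ k)
      (fun j => f (((2 ^ k : ℝ) - r + 1 + j) / 2 ^ k)))

/-- The coefficient functional `a_{k,s}(f)`. -/
def aks (r m : ℕ) (lam : ℤ → ℝ) (k : ℕ) (f : ℝ → ℝ) (s : ℤ) : ℝ :=
  ∑ j ∈ Finset.Icc (-(m:ℤ)) (m:ℤ), lam j * extendF r k f (((s - j : ℤ) : ℝ) / 2 ^ k)

/-- The boundary-corrected dyadic quasi-interpolation operator `Q_k` on `[0,1]`. -/
def Qb (r m : ℕ) (lam : ℤ → ℝ) (k : ℕ) (f : ℝ → ℝ) (x : ℝ) : ℝ :=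
  ∑' s : ℤ,
    if -(r : ℤ) < 2 * s ∧ 2 * s < 2 ^ (k + 1) + r then
      aks r m lam k f s * centerB r ((2:ℝ) ^ k * x - (s : ℝ))
    else 0

/-- `Q_k` applied in coordinate `i`. -/
def QbC (d r m : ℕ) (lam : ℤ → ℝ) (i : Fin d) (k : ℕ) (f : (Fin d → ℝ) → ℝ)
    (x : Fin d → ℝ) : ℝ :=
  Qb r m lam k (fun y => f (Function.update x i y)) (x i)

/-- `Q_k - Q_{k-1}` applied in coordinate `i` (with `Q_{-1} = 0`). -/
def qbDiffC (d r m : ℕ) (lam : ℤ → ℝ) (i : Fin d) (k : ℕ) (f : (Fin d → ℝ) → ℝ)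
    (x : Fin d → ℝ) : ℝ :=
  QbC d r m lam i k f x - (if k = 0 then 0 else QbC d r m lam i (k - 1) f x)

/-- The mixed operator `Q_k = ∏_i Q_{k_i}`. -/
def QMix (d r m : ℕ) (lam : ℤ → ℝ) (k : Fin d → ℕ) (f : (Fin d → ℝ) → ℝ) :
    (Fin d → ℝ) → ℝ :=
  (List.finRange d).foldr (fun i g => QbC d r m lam i (k i) g) f

/-- The mixed dyadic component `q_k = ∏_i (Q_{k_i} - Q_{k_i - 1})`. -/
def qMix (d r m : ℕ) (lam : ℤ → ℝ) (k : Fin d → ℕ) (f : (Fin d → ℝ) → ℝ) :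
    (Fin d → ℝ) → ℝ :=
  (List.finRange d).foldr (fun i g => qbDiffC d r m lam i (k i) g) f

/-- `R_Δ(f) = ∑_{k ∈ Δ} q_k(f)`. -/
def RDelta (d r m : ℕ) (lam : ℤ → ℝ) (Δ : Set (Fin d → ℕ)) (f : (Fin d → ℝ) → ℝ)
    (x : Fin d → ℝ) : ℝ :=
  ∑' k : Δ, qMix d r m lam k f x

/-- Convergence of the series `∑_{k ∈ ℤ_+^d} F_k` to `g` in the norm of `L_∞(𝕀^d)`. -/
def ConvLinf (d : ℕ) (F : (Fin d → ℕ) → (Fin d → ℝ) → ℝ) (g : (Fin d → ℝ) → ℝ) : Prop :=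
  Tendsto (fun Δ : Finset (Fin d → ℕ) =>
      eLpNorm (fun x => g x - ∑ k ∈ Δ, F k x) ∞ (volume.restrict (cube d)))
    atTop (nhds 0)

/-- The quantity `B_4({g_k}) = (∑_k {‖g_k‖_p / Ω(2^{-k})}^θ)^{1/θ}`. -/
def B4seq (d : ℕ) (p θ : ℝ≥0∞) (Ω : (Fin d → ℝ) → ℝ)
    (gk : (Fin d → ℕ) → (Fin d → ℝ) → ℝ) : ℝ≥0∞ :=
  if θ = ∞ then ⨆ k : Fin d → ℕ, lpQ d p (gk k) / ENNReal.ofReal (Ω (dyadic d k))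
  else (∑' k : Fin d → ℕ,
      (lpQ d p (gk k) / ENNReal.ofReal (Ω (dyadic d k))) ^ θ.toReal) ^ (1 / θ.toReal)

/-- The quantity `B_2(f) = (∑_k {‖q_k(f)‖_p / Ω(2^{-k})}^θ)^{1/θ}`. -/
def B2 (d r m : ℕ) (lam : ℤ → ℝ) (p θ : ℝ≥0∞) (Ω : (Fin d → ℝ) → ℝ)
    (f : (Fin d → ℝ) → ℝ) : ℝ≥0∞ :=
  B4seq d p θ Ω (fun k => qMix d r m lam k f)

/-- The quasi-norm `‖f‖_{B^ψ_{p,θ}} = (∑_k (2^{ψ(k)} ‖q_k f‖_p)^θ)^{1/θ}`. -/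
def bpsiNorm (d r m : ℕ) (lam : ℤ → ℝ) (ψ : (Fin d → ℕ) → ℝ) (p θ : ℝ≥0∞)
    (f : (Fin d → ℝ) → ℝ) : ℝ≥0∞ :=
  if θ = ∞ then
    ⨆ k : Fin d → ℕ, ENNReal.ofReal ((2:ℝ) ^ (ψ k)) * lpQ d p (qMix d r m lam k f)
  else (∑' k : Fin d → ℕ,
      (ENNReal.ofReal ((2:ℝ) ^ (ψ k)) * lpQ d p (qMix d r m lam k f)) ^ θ.toReal) ^
    (1 / θ.toReal)

/-- `I^d(k) = {s ∈ ℤ_+^d : 0 ≤ s_i ≤ 2^{k_i}}`. -/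
def IdkF (d : ℕ) (k : Fin d → ℕ) : Finset (Fin d → ℕ) :=
  Fintype.piFinset fun i => Finset.range (2 ^ (k i) + 1)

/-- The dyadic grid point `2^{-k} s`. -/
def gridPt (d : ℕ) (k : Fin d → ℕ) (s : Fin d → ℕ) : Fin d → ℝ :=
  fun i => (s i : ℝ) / 2 ^ (k i)

/-- `|G(Δ)| = ∑_{k ∈ Δ} ∏_j (2^{k_j} + 1)`, counted with multiplicity. -/
def gridSizeE (d : ℕ) (Δ : Set (Fin d → ℕ)) : ℝ≥0∞ :=
  ∑' k : Δ, ∏ i, ((2:ℝ≥0∞) ^ ((k : Fin d → ℕ) i) + 1)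

/-- `∑_{k ∈ Δ} 2^{|k|_1}`. -/
def sum2E (d : ℕ) (Δ : Set (Fin d → ℕ)) : ℝ≥0∞ :=
  ∑' k : Δ, (2:ℝ≥0∞) ^ (∑ i, (k : Fin d → ℕ) i)

/-- The set `A` of triples `(p,θ,q)`. -/
def tripleA (p θ q : ℝ≥0∞) : Prop :=
  (q ≤ p ∧ θ ≤ min q 1) ∨ (p < q ∧ q < ∞ ∧ θ ≤ q) ∨ (p < q ∧ q = ∞ ∧ θ ≤ 1)

/-- `(1/p - 1/q)_+`. -/
def rhoPQ (p q : ℝ≥0∞) : ℝ := max 0 (p⁻¹.toReal - q⁻¹.toReal)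

/-- The sparse index set `Δ(ξ)` for the classes `U^{α,β}_{p,θ}`. -/
def DeltaAB (d : ℕ) (p θ q : ℝ≥0∞) (α β ε : ℝ) (ξ : ℝ) : Set (Fin d → ℕ) :=
  if tripleA p θ q then
    {k | (α - rhoPQ p q) * knorm1 d k + β * knormInf d k ≤ ξ}
  else if 0 < β then
    {k | (α - rhoPQ p q + ε / d) * knorm1 d k + (β - ε) * knormInf d k ≤ ξ}
  else
    {k | (α - rhoPQ p q - ε) * knorm1 d k + (β + ε) * knormInf d k ≤ ξ}

/-- The sparse index set `Δ'(ξ)` for the classes `U^a_{p,θ}`. -/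
def DeltaA (d : ℕ) (p θ q : ℝ≥0∞) (a : Fin d → ℝ) (ε : ℝ) (ξ : ℝ) : Set (Fin d → ℕ) :=
  if tripleA p θ q then
    {k | (∑ i, a i * (k i : ℝ)) - rhoPQ p q * knorm1 d k ≤ ξ}
  else
    {k | (∑ i : Fin d, (if i.val = 0 then a i else a i - ε) * (k i : ℝ))
          - rhoPQ p q * knorm1 d k ≤ ξ}

/-- The sparse index set `Δ''(ξ)` for recovery in the energy norm. -/
def DeltaG (d : ℕ) (p q θ τ : ℝ≥0∞) (α β γ ε : ℝ) (ξ : ℝ) : Set (Fin d → ℕ) :=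
  if θ ≤ min τ 1 then
    {k | (α - rhoPQ p q) * knorm1 d k - (γ - β) * knormInf d k ≤ ξ}
  else if γ < β then
    {k | (α - rhoPQ p q + ε / d) * knorm1 d k - (γ - β - ε) * knormInf d k ≤ ξ}
  else
    {k | (α - rhoPQ p q - ε) * knorm1 d k - (γ - β + ε) * knormInf d k ≤ ξ}

/-- The unit ball of `B^Ω_{p,θ}` (of continuous functions). -/
def Uball (d r : ℕ) (p θ : ℝ≥0∞) (Ω : (Fin d → ℝ) → ℝ) : Set ((Fin d → ℝ) → ℝ) :=
  {f | ContinuousOn f (cube d) ∧ besovNorm d r p θ Ω f ≤ 1}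

/-- The quantity `r_n(W, ·)` of optimal linear sampling recovery. -/
def rW (d n : ℕ) (W : Set ((Fin d → ℝ) → ℝ)) (nrm : ((Fin d → ℝ) → ℝ) → ℝ≥0∞) : ℝ≥0∞ :=
  ⨅ (X : Fin n → Fin d → ℝ) (_ : ∀ j, X j ∈ cube d) (Φ : Fin n → (Fin d → ℝ) → ℝ),
    ⨆ f ∈ W, nrm (fun x => f x - ∑ j, f (X j) * Φ j x)

/-- The quantity `ϱ_n(W, ·)` of optimal (nonlinear) sampling recovery. -/
def rhoW (d n : ℕ) (W : Set ((Fin d → ℝ) → ℝ)) (nrm : ((Fin d → ℝ) → ℝ) → ℝ≥0∞) : ℝ≥0∞ :=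
  ⨅ (X : Fin n → Fin d → ℝ) (_ : ∀ j, X j ∈ cube d) (P : (Fin n → ℝ) → (Fin d → ℝ) → ℝ),
    ⨆ f ∈ W, nrm (fun x => f x - P (fun j => f (X j)) x)

/-- The quantity `i_n(W)` of optimal cubature. -/
def iW (d n : ℕ) (W : Set ((Fin d → ℝ) → ℝ)) : ℝ≥0∞ :=
  ⨅ (X : Fin n → Fin d → ℝ) (_ : ∀ j, X j ∈ cube d) (Λ : Fin n → ℝ),
    ⨆ f ∈ W, ENNReal.ofReal |(∫ x in cube d, f x) - ∑ j, Λ j * f (X j)|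

/-- `R_Δ` is a linear sampling algorithm on the grid `G(Δ)`. -/
def IsSamplingAlg (d r m : ℕ) (lam : ℤ → ℝ) (Δ : Set (Fin d → ℕ)) : Prop :=
  ∃ ψ : (Fin d → ℕ) → (Fin d → ℕ) → (Fin d → ℝ) → ℝ,
    ∀ f : (Fin d → ℝ) → ℝ, ContinuousOn f (cube d) → ∀ x ∈ cube d,
      RDelta d r m lam Δ f x =
        ∑' k : Δ, ∑ s ∈ IdkF d (k : Fin d → ℕ), f (gridPt d (k : Fin d → ℕ) s) * ψ k s x

/-- The discrete quasi-norm `B_1(f)`. -/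
def B1 (d r : ℕ) (p θ : ℝ≥0∞) (Ω : (Fin d → ℝ) → ℝ) (f : (Fin d → ℝ) → ℝ) : ℝ≥0∞ :=
  ∑ e : Finset (Fin d),
    if θ = ∞ then
      ⨆ (k : Fin d → ℕ) (_ : ∀ i ∉ e, k i = 0),
        modulus d r e p f (dyadic d k) / ENNReal.ofReal (Ω (dyadic d k))
    else
      (∑' k : Fin d → ℕ,
          if ∀ i ∉ e, k i = 0 then
            (modulus d r e p f (dyadic d k) / ENNReal.ofReal (Ω (dyadic d k))) ^ θ.toReal
          else 0) ^ (1 / θ.toReal)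

end SparseGrid

namespace SparseGrid

/-- The quasi-norm `‖{x_k}‖_{b_θ^ψ}` of a (positive) sequence. -/
def seqNormE (d : ℕ) (θ : ℝ≥0∞) (ψ : (Fin d → ℕ) → ℝ) (x : (Fin d → ℕ) → ℝ) : ℝ≥0∞ :=
  if θ = ∞ then ⨆ k : Fin d → ℕ, ENNReal.ofReal ((2:ℝ) ^ (ψ k) * x k)
  else (∑' k : Fin d → ℕ, ENNReal.ofReal ((2:ℝ) ^ (ψ k) * x k) ^ θ.toReal) ^ (1 / θ.toReal)

end SparseGrid

namespace HardyAux

lemma tsum_pi_prod : ∀ (d : ℕ) (f : Fin d → ℕ → ℝ≥0∞),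
    (∑' s : Fin d → ℕ, ∏ i, f i (s i)) = ∏ i, ∑' n : ℕ, f i n := by
  intro d
  induction d with
  | zero =>
    intro f
    rw [tsum_eq_single (fun i => 0)]
    · simp
    · intro b hb; exact absurd (Subsingleton.elim b _) hb
  | succ n ih =>
    intro f
    rw [← (Fin.consEquiv (fun _ : Fin (n+1) => ℕ)).tsum_eq fun s => ∏ i, f i (s i)]
    have hp : ∀ p : ℕ × (Fin n → ℕ),
        (∏ i, f i ((Fin.consEquiv (fun _ : Fin (n+1) => ℕ)) p i)) =
          f 0 p.1 * ∏ i : Fin n, f i.succ (p.2 i) := by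
      intro p
      rw [Fin.prod_univ_succ]
      simp [Fin.consEquiv]
    calc (∑' p : ℕ × (Fin n → ℕ), ∏ i, f i ((Fin.consEquiv fun _ => ℕ) p i))
        = ∑' (a : ℕ) (s : Fin n → ℕ), f 0 a * ∏ i : Fin n, f i.succ (s i) := by
          rw [tsum_congr hp, ENNReal.tsum_prod']
      _ = (∑' a : ℕ, f 0 a) * ∑' s : Fin n → ℕ, ∏ i : Fin n, f i.succ (s i) := by
          simp_rw [ENNReal.tsum_mul_left, ENNReal.tsum_mul_right]
      _ = ∏ i : Fin (n+1), ∑' m : ℕ, f i m := by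
          rw [ih fun i => f i.succ, Fin.prod_univ_succ]

lemma geo1 (r : ℝ≥0∞) (m : ℕ) :
    ∑' n : ℕ, r ^ Nat.dist m n ≤ 2 * (1 - r)⁻¹ := by
  set S : Set ℕ := {n | n < m} with hS
  have hsplit := Summable.tsum_add_tsum_compl (f := fun n => r ^ Nat.dist m n) (s := S)
    ENNReal.summable ENNReal.summable
  rw [← hsplit, two_mul]
  have h1 : (∑' x : S, r ^ Nat.dist m (x : ℕ)) ≤ (1 - r)⁻¹ := by
    have e : ∀ x : S, r ^ Nat.dist m (x : ℕ) = (fun j : ℕ => r ^ j) (m - (x : ℕ)) := by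
      intro x
      have hx : (x : ℕ) < m := x.2
      simp only
      congr 1
      simp [Nat.dist]; omega
    rw [tsum_congr e]
    refine le_trans (ENNReal.tsum_comp_le_tsum_of_injective ?_ fun j => r ^ j) ?_
    · intro x y hxy
      have hx : (x : ℕ) < m := x.2
      have hy : (y : ℕ) < m := y.2
      ext
      simp only at hxy
      omega
    · exact le_of_eq (ENNReal.tsum_geometric r)
  have h2 : (∑' x : ↥Sᶜ, r ^ Nat.dist m (x : ℕ)) ≤ (1 - r)⁻¹ := by
    have e : ∀ x : ↥Sᶜ, r ^ Nat.dist m (x : ℕ) = (fun j : ℕ => r ^ j) ((x : ℕ) - m) := by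
      intro x
      have hx : m ≤ (x : ℕ) := not_lt.1 x.2
      simp only
      congr 1
      simp [Nat.dist]; omega
    rw [tsum_congr e]
    refine le_trans (ENNReal.tsum_comp_le_tsum_of_injective ?_ fun j => r ^ j) ?_
    · intro x y hxy
      have hx : m ≤ (x : ℕ) := not_lt.1 x.2
      have hy : m ≤ (y : ℕ) := not_lt.1 y.2
      ext
      simp only at hxy
      omega
    · exact le_of_eq (ENNReal.tsum_geometric r)
  exact add_le_add h1 h2

lemma geoD (d : ℕ) (r : ℝ≥0∞) (k : Fin d → ℕ) :
    ∑' s : Fin d → ℕ, r ^ (∑ i, Nat.dist (k i) (s i)) ≤ (2 * (1 - r)⁻¹) ^ d := by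
  have : ∀ s : Fin d → ℕ, r ^ (∑ i, Nat.dist (k i) (s i)) =
      ∏ i, r ^ Nat.dist (k i) (s i) := by
    intro s; rw [Finset.prod_pow_eq_pow_sum]
  rw [tsum_congr this, tsum_pi_prod d fun i n => r ^ Nat.dist (k i) n]
  calc (∏ i, ∑' n : ℕ, r ^ Nat.dist (k i) n) ≤ ∏ _i : Fin d, 2 * (1 - r)⁻¹ :=
        Finset.prod_le_prod' fun i _ => geo1 r (k i)
    _ = (2 * (1 - r)⁻¹) ^ d := by rw [Finset.prod_const, Finset.card_univ, Fintype.card_fin]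

lemma tsum_rpow_le {ι : Type*} (g : ι → ℝ≥0∞) (q : ℝ) (hq : 1 ≤ q) :
    ∑' i, g i ^ q ≤ (∑' i, g i) ^ q := by
  have hq0 : 0 ≤ q - 1 := by linarith
  have hsplit : ∀ x : ℝ≥0∞, x ^ q = x ^ (q - 1) * x := by
    intro x
    have h := ENNReal.rpow_add_of_nonneg (x := x) (q - 1) 1 hq0 zero_le_one
    rw [ENNReal.rpow_one] at h
    rw [← h]; congr 1; ring
  have key : ∀ i, g i ^ q ≤ (∑' i, g i) ^ (q - 1) * g i := by
    intro i
    rw [hsplit (g i)]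
    exact mul_le_mul_left (ENNReal.rpow_le_rpow (ENNReal.le_tsum i) hq0) (g i)
  calc (∑' i, g i ^ q) ≤ ∑' i, (∑' j, g j) ^ (q - 1) * g i := ENNReal.tsum_le_tsum key
    _ = (∑' j, g j) ^ (q - 1) * ∑' i, g i := ENNReal.tsum_mul_left
    _ = (∑' j, g j) ^ q := (hsplit _).symm

lemma holder_tsum {ι : Type*} (w f : ι → ℝ≥0∞) (p : ℝ) (hp : 1 ≤ p) :
    ∑' i, w i * f i ≤ (∑' i, w i) ^ (1 - p⁻¹) * (∑' i, w i * f i ^ p) ^ p⁻¹ := by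
  have h1 : (0:ℝ) ≤ 1 - p⁻¹ := by
    have : p⁻¹ ≤ 1 := by
      rw [inv_le_one_iff₀]; right; linarith
    linarith
  have h2 : (0:ℝ) ≤ p⁻¹ := by positivity
  rw [ENNReal.tsum_eq_iSup_sum]
  refine iSup_le fun F => ?_
  calc (∑ i ∈ F, w i * f i)
      ≤ (∑ i ∈ F, w i) ^ (1 - p⁻¹) * (∑ i ∈ F, w i * f i ^ p) ^ p⁻¹ :=
        ENNReal.inner_le_weight_mul_Lp_of_nonneg F hp w f
    _ ≤ (∑' i, w i) ^ (1 - p⁻¹) * (∑' i, w i * f i ^ p) ^ p⁻¹ := by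
        gcongr <;> exact ENNReal.sum_le_tsum F


lemma rpow_inv_self (x : ℝ≥0∞) (τ : ℝ) (hτ : τ ≠ 0) : (x ^ τ) ^ (1/τ) = x := by
  rw [← ENNReal.rpow_mul, mul_one_div, div_self hτ, ENNReal.rpow_one]

lemma pow_term (r y : ℝ≥0∞) (D : ℕ) (t : ℝ) (ht : 0 ≤ t) :
    (r ^ D * y) ^ t = (r ^ t) ^ D * y ^ t := by
  rw [ENNReal.mul_rpow_of_nonneg _ _ ht]
  congr 1
  rw [← ENNReal.rpow_natCast r D, ← ENNReal.rpow_mul, mul_comm, ENNReal.rpow_mul,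
    ENNReal.rpow_natCast]

lemma Kfin (d : ℕ) (ρ : ℝ≥0∞) (hρ : ρ < 1) : ((2 * (1 - ρ)⁻¹ : ℝ≥0∞)) ^ d ≠ ∞ := by
  apply ENNReal.pow_ne_top
  apply ENNReal.mul_ne_top ENNReal.ofNat_ne_top
  simp only [Ne, ENNReal.inv_eq_top, tsub_eq_zero_iff_le]
  exact not_le.mpr hρ


/-- Real pointwise estimate. -/
lemma hpt_real (d : ℕ) (δ ε ζ c₁ c₂ : ℝ) (hδ : 0 < δ) (hε : 0 < ε) (hζδ : ζ < δ)
    (a : (Fin d → ℕ) → ℝ) (ha : ∀ k, 0 < a k)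
    (ψ : (Fin d → ℕ) → ℝ)
    (h1 : ∀ k k' : Fin d → ℕ, (∀ i, k i ≤ k' i) →
      ψ k - ε * (∑ i, (k i : ℝ)) ≤ ψ k' - ε * (∑ i, (k' i : ℝ)) + c₁)
    (h2 : ∀ k k' : Fin d → ℕ, (∀ i, k i ≤ k' i) →
      ψ k - ζ * (∑ i, (k i : ℝ)) ≥ ψ k' - ζ * (∑ i, (k' i : ℝ)) + c₂)
    (k s : Fin d → ℕ) :
    (2:ℝ) ^ (ψ k) * ((2:ℝ) ^ (-δ * ∑ i, ((k i - s i : ℕ) : ℝ)) * a s) ≤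
      (2:ℝ) ^ (c₁ - c₂) *
        (((2:ℝ) ^ (-(min (δ - ζ) ε))) ^ (∑ i, Nat.dist (k i) (s i)) *
          ((2:ℝ) ^ (ψ s) * a s)) := by
  set η := min (δ - ζ) ε with hηdef
  set u : Fin d → ℕ := fun i => min (k i) (s i) with hu
  have hku : ∀ i, u i ≤ k i := fun i => min_le_left _ _
  have hsu : ∀ i, u i ≤ s i := fun i => min_le_right _ _
  set P : ℝ := ∑ i, ((k i - s i : ℕ) : ℝ) with hPdef
  set D : ℕ := ∑ i, Nat.dist (k i) (s i) with hDdef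
  -- exponent inequality
  have hP : P = (∑ i, (k i : ℝ)) - ∑ i, (u i : ℝ) := by
    rw [hPdef, ← Finset.sum_sub_distrib]
    refine Finset.sum_congr rfl fun i _ => ?_
    have h' : k i - s i = k i - u i := by
      have : u i = min (k i) (s i) := rfl
      omega
    rw [h', Nat.cast_sub (hku i)]
  have hD : (D : ℝ) =
      ((∑ i, (k i : ℝ)) - ∑ i, (u i : ℝ)) + ((∑ i, (s i : ℝ)) - ∑ i, (u i : ℝ)) := by
    have hcast : ∀ i : Fin d, (Nat.dist (k i) (s i) : ℝ) =
        ((k i : ℝ) - (u i : ℝ)) + ((s i : ℝ) - (u i : ℝ)) := by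
      intro i
      have hnat : Nat.dist (k i) (s i) = (k i - u i) + (s i - u i) := by
        have : u i = min (k i) (s i) := rfl
        simp only [Nat.dist]
        omega
      rw [hnat]
      push_cast [Nat.cast_sub (hku i), Nat.cast_sub (hsu i)]
      ring
    rw [hDdef]
    push_cast
    rw [Finset.sum_congr rfl fun i _ => hcast i]
    rw [Finset.sum_add_distrib, Finset.sum_sub_distrib, Finset.sum_sub_distrib]
  have hX0 : 0 ≤ (∑ i, (k i : ℝ)) - ∑ i, (u i : ℝ) := by
    have : (∑ i, (u i : ℝ)) ≤ ∑ i, (k i : ℝ) :=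
      Finset.sum_le_sum fun i _ => Nat.cast_le.mpr (hku i)
    linarith
  have hY0 : 0 ≤ (∑ i, (s i : ℝ)) - ∑ i, (u i : ℝ) := by
    have : (∑ i, (u i : ℝ)) ≤ ∑ i, (s i : ℝ) :=
      Finset.sum_le_sum fun i _ => Nat.cast_le.mpr (hsu i)
    linarith
  have hexp : ψ k + (-δ * P) ≤ (c₁ - c₂) + (-η * D) + ψ s := by
    have e1 := h2 u k hku
    have e2 := h1 u s hsu
    have q1 : η * ((∑ i, (k i : ℝ)) - ∑ i, (u i : ℝ)) ≤
        (δ - ζ) * ((∑ i, (k i : ℝ)) - ∑ i, (u i : ℝ)) :=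
      mul_le_mul_of_nonneg_right (min_le_left _ _) hX0
    have q2 : η * ((∑ i, (s i : ℝ)) - ∑ i, (u i : ℝ)) ≤
        ε * ((∑ i, (s i : ℝ)) - ∑ i, (u i : ℝ)) :=
      mul_le_mul_of_nonneg_right (min_le_right _ _) hY0
    rw [hP, hD]
    nlinarith [e1, e2, q1, q2]
  have hr0D : ((2:ℝ) ^ (-η)) ^ D = (2:ℝ) ^ (-η * (D:ℝ)) := by
    rw [← Real.rpow_natCast ((2:ℝ) ^ (-η)) D, ← Real.rpow_mul (by norm_num : (0:ℝ) ≤ 2)]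
  calc (2:ℝ) ^ (ψ k) * ((2:ℝ) ^ (-δ * P) * a s)
      = (2:ℝ) ^ (ψ k + (-δ * P)) * a s := by
        rw [Real.rpow_add two_pos]; ring
    _ ≤ (2:ℝ) ^ ((c₁ - c₂) + (-η * (D:ℝ)) + ψ s) * a s :=
        mul_le_mul_of_nonneg_right
          (Real.rpow_le_rpow_of_exponent_le one_le_two hexp) (ha s).le
    _ = (2:ℝ) ^ (c₁ - c₂) * (((2:ℝ) ^ (-η)) ^ D * ((2:ℝ) ^ (ψ s) * a s)) := by
        rw [Real.rpow_add two_pos, Real.rpow_add two_pos, hr0D]; ring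


/-- pull a constant inside a `(∑ ∘ ^τ)^(1/τ)` expression -/
lemma const_mul_lpnorm {ι : Type*} (c : ℝ≥0∞) (g : ι → ℝ≥0∞) (τ : ℝ) (hτ : 0 < τ) :
    c * (∑' i, g i ^ τ) ^ (1/τ) = (∑' i, (c * g i) ^ τ) ^ (1/τ) := by
  have h : (∑' i, (c * g i) ^ τ) = c ^ τ * ∑' i, g i ^ τ := by
    simp_rw [ENNReal.mul_rpow_of_nonneg _ _ hτ.le]
    rw [ENNReal.tsum_mul_left]
  rw [h, ENNReal.mul_rpow_of_nonneg _ _ (by positivity : (0:ℝ) ≤ 1/τ),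
    rpow_inv_self c τ hτ.ne']

lemma keyX (d : ℕ) (τ δ ε ζ c₁ c₂ : ℝ) (hτ : 0 < τ) (hδ : 0 < δ) (hε : 0 < ε) (hζδ : ζ < δ)
    (A : ℝ) (a b : (Fin d → ℕ) → ℝ) (ha : ∀ k, 0 < a k)
    (hyp : ∀ k : Fin d → ℕ, ENNReal.ofReal (b k) ≤
      ENNReal.ofReal A *
        (∑' s : Fin d → ℕ,
            ENNReal.ofReal ((2:ℝ) ^ (-δ * ∑ i, ((k i - s i : ℕ) : ℝ)) * a s) ^ τ) ^ (1 / τ))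
    (ψ : (Fin d → ℕ) → ℝ)
    (h1 : ∀ k k' : Fin d → ℕ, (∀ i, k i ≤ k' i) →
      ψ k - ε * (∑ i, (k i : ℝ)) ≤ ψ k' - ε * (∑ i, (k' i : ℝ)) + c₁)
    (h2 : ∀ k k' : Fin d → ℕ, (∀ i, k i ≤ k' i) →
      ψ k - ζ * (∑ i, (k i : ℝ)) ≥ ψ k' - ζ * (∑ i, (k' i : ℝ)) + c₂)
    (k : Fin d → ℕ) :
    ENNReal.ofReal ((2:ℝ) ^ (ψ k) * b k) ≤
      ENNReal.ofReal A * ENNReal.ofReal ((2:ℝ) ^ (c₁ - c₂)) *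
        (∑' s : Fin d → ℕ,
          (ENNReal.ofReal ((2:ℝ) ^ (-(min (δ - ζ) ε))) ^ (∑ i, Nat.dist (k i) (s i)) *
            ENNReal.ofReal ((2:ℝ) ^ (ψ s) * a s)) ^ τ) ^ (1 / τ) := by
  have hpt := hpt_real d δ ε ζ c₁ c₂ hδ hε hζδ a ha ψ h1 h2 k
  set η := min (δ - ζ) ε with hηdef
  set cψ := ENNReal.ofReal ((2:ℝ) ^ (ψ k)) with hcψ
  set cE := ENNReal.ofReal ((2:ℝ) ^ (c₁ - c₂)) with hcE
  set r := ENNReal.ofReal ((2:ℝ) ^ (-η)) with hr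
  have h2nn : ∀ x : ℝ, (0:ℝ) ≤ (2:ℝ) ^ x := fun x => (Real.rpow_pos_of_pos two_pos x).le
  calc ENNReal.ofReal ((2:ℝ) ^ (ψ k) * b k)
      = cψ * ENNReal.ofReal (b k) := ENNReal.ofReal_mul (h2nn _)
    _ ≤ cψ * (ENNReal.ofReal A *
        (∑' s : Fin d → ℕ,
            ENNReal.ofReal ((2:ℝ) ^ (-δ * ∑ i, ((k i - s i : ℕ) : ℝ)) * a s) ^ τ) ^ (1/τ)) :=
        mul_le_mul_right (hyp k) cψ
    _ = ENNReal.ofReal A *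
        (∑' s : Fin d → ℕ,
          (cψ * ENNReal.ofReal ((2:ℝ) ^ (-δ * ∑ i, ((k i - s i : ℕ) : ℝ)) * a s)) ^ τ) ^ (1/τ) := by
        rw [← const_mul_lpnorm cψ _ τ hτ]; ring
    _ ≤ ENNReal.ofReal A *
        (∑' s : Fin d → ℕ,
          (cE * (r ^ (∑ i, Nat.dist (k i) (s i)) *
            ENNReal.ofReal ((2:ℝ) ^ (ψ s) * a s))) ^ τ) ^ (1/τ) := by
        refine mul_le_mul_right (ENNReal.rpow_le_rpow (ENNReal.tsum_le_tsum fun s => ?_)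
          (by positivity)) _
        refine ENNReal.rpow_le_rpow ?_ hτ.le
        rw [hcψ, ← ENNReal.ofReal_mul (h2nn _)]
        rw [hcE, hr, ← ENNReal.ofReal_pow (h2nn _), ← ENNReal.ofReal_mul (pow_nonneg (h2nn _) _),
          ← ENNReal.ofReal_mul (h2nn _)]
        exact ENNReal.ofReal_le_ofReal (hpt s)
    _ = ENNReal.ofReal A * cE *
        (∑' s : Fin d → ℕ,
          (r ^ (∑ i, Nat.dist (k i) (s i)) *
            ENNReal.ofReal ((2:ℝ) ^ (ψ s) * a s)) ^ τ) ^ (1/τ) := by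
        rw [← const_mul_lpnorm cE _ τ hτ]; ring

lemma swap_bound (d : ℕ) (ρ : ℝ≥0∞) (y : (Fin d → ℕ) → ℝ≥0∞) :
    ∑' (k : Fin d → ℕ), ∑' (s : Fin d → ℕ), ρ ^ (∑ i, Nat.dist (k i) (s i)) * y s ≤
      (2 * (1 - ρ)⁻¹) ^ d * ∑' s, y s := by
  rw [ENNReal.tsum_comm]
  calc (∑' (s : Fin d → ℕ), ∑' (k : Fin d → ℕ), ρ ^ (∑ i, Nat.dist (k i) (s i)) * y s)
      = ∑' (s : Fin d → ℕ), (∑' (k : Fin d → ℕ), ρ ^ (∑ i, Nat.dist (k i) (s i))) * y s := by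
        refine tsum_congr fun s => ?_
        rw [ENNReal.tsum_mul_right]
    _ ≤ ∑' (s : Fin d → ℕ), (2 * (1 - ρ)⁻¹) ^ d * y s := by
        refine ENNReal.tsum_le_tsum fun s => mul_le_mul_left ?_ (y s)
        have he : ∀ k : Fin d → ℕ, ρ ^ (∑ i, Nat.dist (k i) (s i)) =
            ρ ^ (∑ i, Nat.dist (s i) (k i)) := by
          intro k; congr 1; exact Finset.sum_congr rfl fun i _ => Nat.dist_comm _ _
        rw [tsum_congr he]
        exact geoD d ρ s
    _ = (2 * (1 - ρ)⁻¹) ^ d * ∑' s, y s := ENNReal.tsum_mul_left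

lemma case_infty (d : ℕ) (τ : ℝ) (hτ : 0 < τ) (r : ℝ≥0∞) (C0 : ℝ≥0∞)
    (x y : (Fin d → ℕ) → ℝ≥0∞)
    (hX : ∀ k, x k ≤ C0 * (∑' s : Fin d → ℕ,
        (r ^ (∑ i, Nat.dist (k i) (s i)) * y s) ^ τ) ^ (1/τ)) :
    (⨆ k, x k) ≤ C0 * ((2 * (1 - r ^ τ)⁻¹) ^ d) ^ (1/τ) * ⨆ s, y s := by
  set K := (2 * (1 - r ^ τ)⁻¹) ^ d with hK
  set N := ⨆ s, y s with hN
  refine iSup_le fun k => (hX k).trans ?_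
  have h : (∑' s : Fin d → ℕ, (r ^ (∑ i, Nat.dist (k i) (s i)) * y s) ^ τ) ≤ K * N ^ τ := by
    calc (∑' s : Fin d → ℕ, (r ^ (∑ i, Nat.dist (k i) (s i)) * y s) ^ τ)
        ≤ ∑' s : Fin d → ℕ, (r ^ τ) ^ (∑ i, Nat.dist (k i) (s i)) * N ^ τ := by
          refine ENNReal.tsum_le_tsum fun s => ?_
          rw [pow_term r (y s) _ τ hτ.le]
          exact mul_le_mul_right (ENNReal.rpow_le_rpow (le_iSup y s) hτ.le) _
      _ = (∑' s : Fin d → ℕ, (r ^ τ) ^ (∑ i, Nat.dist (k i) (s i))) * N ^ τ :=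
          ENNReal.tsum_mul_right
      _ ≤ K * N ^ τ := mul_le_mul_left (geoD d (r ^ τ) k) _
  calc C0 * (∑' s : Fin d → ℕ, (r ^ (∑ i, Nat.dist (k i) (s i)) * y s) ^ τ) ^ (1/τ)
      ≤ C0 * (K * N ^ τ) ^ (1/τ) :=
        mul_le_mul_right (ENNReal.rpow_le_rpow h (by positivity)) C0
    _ = C0 * K ^ (1/τ) * N := by
        rw [ENNReal.mul_rpow_of_nonneg _ _ (by positivity : (0:ℝ) ≤ 1/τ),
          rpow_inv_self N τ hτ.ne', mul_assoc]

lemma case_small (d : ℕ) (τ t : ℝ) (hτ : 0 < τ) (ht : 0 < t) (htτ : t ≤ τ)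
    (r : ℝ≥0∞) (C0 : ℝ≥0∞) (x y : (Fin d → ℕ) → ℝ≥0∞)
    (hX : ∀ k, x k ≤ C0 * (∑' s : Fin d → ℕ,
        (r ^ (∑ i, Nat.dist (k i) (s i)) * y s) ^ τ) ^ (1/τ)) :
    (∑' k, x k ^ t) ^ (1/t) ≤
      C0 * ((2 * (1 - r ^ t)⁻¹) ^ d) ^ (1/t) * (∑' s, y s ^ t) ^ (1/t) := by
  set K := (2 * (1 - r ^ t)⁻¹) ^ d with hK
  have hXt : ∀ k, x k ^ t ≤ C0 ^ t *
      ∑' s : Fin d → ℕ, (r ^ (∑ i, Nat.dist (k i) (s i)) * y s) ^ t := by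
    intro k
    set T := ∑' s : Fin d → ℕ, (r ^ (∑ i, Nat.dist (k i) (s i)) * y s) ^ t with hT
    have step : (∑' s : Fin d → ℕ, (r ^ (∑ i, Nat.dist (k i) (s i)) * y s) ^ τ) ^ (1/τ) ≤
        T ^ (1/t) := by
      have hq : 1 ≤ τ / t := (one_le_div ht).mpr htτ
      have h1 := tsum_rpow_le
        (fun s : Fin d → ℕ => (r ^ (∑ i, Nat.dist (k i) (s i)) * y s) ^ t) (τ/t) hq
      have he : ∀ s : Fin d → ℕ,
          ((r ^ (∑ i, Nat.dist (k i) (s i)) * y s) ^ t) ^ (τ/t) =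
            (r ^ (∑ i, Nat.dist (k i) (s i)) * y s) ^ τ := by
        intro s
        rw [← ENNReal.rpow_mul]
        congr 1
        field_simp
        try ring
      rw [tsum_congr he] at h1
      calc (∑' s : Fin d → ℕ, (r ^ (∑ i, Nat.dist (k i) (s i)) * y s) ^ τ) ^ (1/τ)
          ≤ (T ^ (τ/t)) ^ (1/τ) := ENNReal.rpow_le_rpow h1 (by positivity)
        _ = T ^ (1/t) := by
            rw [← ENNReal.rpow_mul]
            congr 1
            field_simp
            try ring
    calc x k ^ t ≤ (C0 * T ^ (1/t)) ^ t :=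
          ENNReal.rpow_le_rpow ((hX k).trans (mul_le_mul_right step C0)) ht.le
      _ = C0 ^ t * T := by
          rw [ENNReal.mul_rpow_of_nonneg _ _ ht.le, ← ENNReal.rpow_mul,
            one_div, inv_mul_cancel₀ ht.ne', ENNReal.rpow_one]
  have hsum : (∑' k, x k ^ t) ≤ C0 ^ t * (K * ∑' s, y s ^ t) := by
    calc (∑' k, x k ^ t)
        ≤ ∑' (k : Fin d → ℕ), C0 ^ t *
            ∑' s : Fin d → ℕ, (r ^ (∑ i, Nat.dist (k i) (s i)) * y s) ^ t :=
          ENNReal.tsum_le_tsum hXt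
      _ = C0 ^ t * ∑' (k : Fin d → ℕ),
            ∑' s : Fin d → ℕ, (r ^ (∑ i, Nat.dist (k i) (s i)) * y s) ^ t :=
          ENNReal.tsum_mul_left
      _ ≤ C0 ^ t * (K * ∑' s, y s ^ t) := by
          refine mul_le_mul_right ?_ _
          have he : ∀ (k s : Fin d → ℕ),
              (r ^ (∑ i, Nat.dist (k i) (s i)) * y s) ^ t =
                (r ^ t) ^ (∑ i, Nat.dist (k i) (s i)) * y s ^ t := fun k s =>
            pow_term r (y s) _ t ht.le
          calc (∑' (k : Fin d → ℕ), ∑' (s : Fin d → ℕ),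
                  (r ^ (∑ i, Nat.dist (k i) (s i)) * y s) ^ t)
              = ∑' (k : Fin d → ℕ), ∑' (s : Fin d → ℕ),
                  (r ^ t) ^ (∑ i, Nat.dist (k i) (s i)) * y s ^ t := by
                exact tsum_congr fun k => tsum_congr fun s => he k s
            _ ≤ K * ∑' s, y s ^ t := swap_bound d (r ^ t) fun s => y s ^ t
  calc (∑' k, x k ^ t) ^ (1/t) ≤ (C0 ^ t * (K * ∑' s, y s ^ t)) ^ (1/t) :=
        ENNReal.rpow_le_rpow hsum (by positivity)
    _ = C0 * K ^ (1/t) * (∑' s, y s ^ t) ^ (1/t) := by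
        rw [ENNReal.mul_rpow_of_nonneg _ _ (by positivity : (0:ℝ) ≤ 1/t),
          ENNReal.mul_rpow_of_nonneg _ _ (by positivity : (0:ℝ) ≤ 1/t),
          rpow_inv_self C0 t ht.ne', mul_assoc]

lemma case_big (d : ℕ) (τ t : ℝ) (hτ : 0 < τ) (ht : 0 < t) (hτt : τ < t)
    (r : ℝ≥0∞) (C0 : ℝ≥0∞) (x y : (Fin d → ℕ) → ℝ≥0∞)
    (hX : ∀ k, x k ≤ C0 * (∑' s : Fin d → ℕ,
        (r ^ (∑ i, Nat.dist (k i) (s i)) * y s) ^ τ) ^ (1/τ)) :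
    (∑' k, x k ^ t) ^ (1/t) ≤
      C0 * (((2 * (1 - r ^ τ)⁻¹) ^ d) ^ (t/τ - 1) * (2 * (1 - r ^ τ)⁻¹) ^ d) ^ (1/t) *
        (∑' s, y s ^ t) ^ (1/t) := by
  set K := (2 * (1 - r ^ τ)⁻¹) ^ d with hK
  set p := t / τ with hp
  have hp1 : 1 < p := (one_lt_div hτ).mpr hτt
  have hp0 : p ≠ 0 := by positivity
  have hXt : ∀ k, x k ^ t ≤ C0 ^ t * (K ^ (p - 1) *
      ∑' s : Fin d → ℕ, (r ^ τ) ^ (∑ i, Nat.dist (k i) (s i)) * y s ^ t) := by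
    intro k
    set W : (Fin d → ℕ) → ℝ≥0∞ := fun s => (r ^ τ) ^ (∑ i, Nat.dist (k i) (s i)) with hW
    set T := ∑' s : Fin d → ℕ, W s * y s ^ t with hT
    have hS : (∑' s : Fin d → ℕ, (r ^ (∑ i, Nat.dist (k i) (s i)) * y s) ^ τ) ≤
        K ^ (1 - p⁻¹) * T ^ p⁻¹ := by
      have he : ∀ s : Fin d → ℕ, (r ^ (∑ i, Nat.dist (k i) (s i)) * y s) ^ τ =
          W s * (y s ^ τ) := fun s => pow_term r (y s) _ τ hτ.le
      rw [tsum_congr he]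
      refine (holder_tsum W (fun s => y s ^ τ) p hp1.le).trans ?_
      have hWF : ∀ s : Fin d → ℕ, W s * (y s ^ τ) ^ p = W s * y s ^ t := by
        intro s
        congr 1
        rw [← ENNReal.rpow_mul]
        congr 1
        rw [hp]
        field_simp
        try ring
      rw [tsum_congr hWF]
      refine mul_le_mul_left (ENNReal.rpow_le_rpow ?_ ?_) _
      · exact geoD d (r ^ τ) k
      · have : p⁻¹ ≤ 1 := by
          rw [inv_le_one_iff₀]; right; exact hp1.le
        linarith
    calc x k ^ t
        ≤ (C0 * (K ^ (1 - p⁻¹) * T ^ p⁻¹) ^ (1/τ)) ^ t := by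
          refine ENNReal.rpow_le_rpow ((hX k).trans ?_) ht.le
          exact mul_le_mul_right (ENNReal.rpow_le_rpow hS (by positivity)) C0
      _ = C0 ^ t * (K ^ (p - 1) * T) := by
          rw [ENNReal.mul_rpow_of_nonneg _ _ ht.le]
          congr 1
          rw [← ENNReal.rpow_mul, ENNReal.mul_rpow_of_nonneg _ _ (by positivity : (0:ℝ) ≤ 1/τ * t)]
          rw [← ENNReal.rpow_mul, ← ENNReal.rpow_mul]
          have e1 : (1 - p⁻¹) * (1/τ * t) = p - 1 := by
            rw [hp]; field_simp; try ring
          have e2 : p⁻¹ * (1/τ * t) = 1 := by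
            rw [hp]; field_simp
          rw [e1, e2, ENNReal.rpow_one]
  have hsum : (∑' k, x k ^ t) ≤ C0 ^ t * (K ^ (p - 1) * (K * ∑' s, y s ^ t)) := by
    calc (∑' k, x k ^ t)
        ≤ ∑' (k : Fin d → ℕ), C0 ^ t * (K ^ (p - 1) *
            ∑' s : Fin d → ℕ, (r ^ τ) ^ (∑ i, Nat.dist (k i) (s i)) * y s ^ t) :=
          ENNReal.tsum_le_tsum hXt
      _ = C0 ^ t * (K ^ (p - 1) * ∑' (k : Fin d → ℕ),
            ∑' s : Fin d → ℕ, (r ^ τ) ^ (∑ i, Nat.dist (k i) (s i)) * y s ^ t) := by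
          rw [ENNReal.tsum_mul_left, ENNReal.tsum_mul_left]
      _ ≤ C0 ^ t * (K ^ (p - 1) * (K * ∑' s, y s ^ t)) := by
          exact mul_le_mul_right (mul_le_mul_right
            (swap_bound d (r ^ τ) fun s => y s ^ t) _) _
  calc (∑' k, x k ^ t) ^ (1/t) ≤ (C0 ^ t * (K ^ (p - 1) * (K * ∑' s, y s ^ t))) ^ (1/t) :=
        ENNReal.rpow_le_rpow hsum (by positivity)
    _ = C0 * (K ^ (p - 1) * K) ^ (1/t) * (∑' s, y s ^ t) ^ (1/t) := by
        rw [ENNReal.mul_rpow_of_nonneg _ _ (by positivity : (0:ℝ) ≤ 1/t),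
          rpow_inv_self C0 t ht.ne', ← mul_assoc (K ^ (p-1)) K _,
          ENNReal.mul_rpow_of_nonneg (K ^ (p-1) * K) _ (by positivity : (0:ℝ) ≤ 1/t),
          mul_assoc]


end HardyAux

open SparseGrid in
/-- Generalized discrete Hardy inequality. -/
theorem statement3 (d : ℕ) (hd : 0 < d) (τ δ ε ζ : ℝ) (c₁ c₂ : ℝ) (θ : ℝ≥0∞)
    (hτ : 0 < τ) (hδ : 0 < δ) (hε : 0 < ε) (hζ0 : 0 < ζ) (hζδ : ζ < δ) (hθ : 0 < θ) :
    ∃ C > (0:ℝ), ∀ (A : ℝ), 0 < A → ∀ a b : (Fin d → ℕ) → ℝ,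
      (∀ k, 0 < a k) → (∀ k, 0 < b k) →
      -- b_k ≤ A (∑_s (2^{-δ|(k-s)_+|_1} a_s)^τ)^{1/τ}
      (∀ k : Fin d → ℕ, ENNReal.ofReal (b k) ≤
        ENNReal.ofReal A *
          (∑' s : Fin d → ℕ,
              ENNReal.ofReal ((2:ℝ) ^ (-δ * ∑ i, ((k i - s i : ℕ) : ℝ)) * a s) ^ τ) ^
            (1 / τ)) →
      ∀ ψ : (Fin d → ℕ) → ℝ,
        (∀ k k' : Fin d → ℕ, (∀ i, k i ≤ k' i) →
          ψ k - ε * knorm1 d k ≤ ψ k' - ε * knorm1 d k' + c₁) →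
        (∀ k k' : Fin d → ℕ, (∀ i, k i ≤ k' i) →
          ψ k - ζ * knorm1 d k ≥ ψ k' - ζ * knorm1 d k' + c₂) →
        seqNormE d θ ψ b ≤ ENNReal.ofReal (C * A) * seqNormE d θ ψ a := by
  classical
  set η := min (δ - ζ) ε with hηdef
  have hη : 0 < η := lt_min (by linarith) hε
  set r : ℝ≥0∞ := ENNReal.ofReal ((2:ℝ) ^ (-η)) with hrdef
  have hr1 : r < 1 := by
    rw [hrdef]
    exact ENNReal.ofReal_lt_one.mpr
      (Real.rpow_lt_one_of_one_lt_of_neg one_lt_two (by linarith))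
  have main : ∃ M : ℝ≥0∞, M ≠ ∞ ∧ ∀ (A : ℝ), 0 < A → ∀ a b : (Fin d → ℕ) → ℝ,
      (∀ k, 0 < a k) → (∀ k, 0 < b k) →
      (∀ k : Fin d → ℕ, ENNReal.ofReal (b k) ≤
        ENNReal.ofReal A *
          (∑' s : Fin d → ℕ,
              ENNReal.ofReal ((2:ℝ) ^ (-δ * ∑ i, ((k i - s i : ℕ) : ℝ)) * a s) ^ τ) ^
            (1 / τ)) →
      ∀ ψ : (Fin d → ℕ) → ℝ,
        (∀ k k' : Fin d → ℕ, (∀ i, k i ≤ k' i) →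
          ψ k - ε * knorm1 d k ≤ ψ k' - ε * knorm1 d k' + c₁) →
        (∀ k k' : Fin d → ℕ, (∀ i, k i ≤ k' i) →
          ψ k - ζ * knorm1 d k ≥ ψ k' - ζ * knorm1 d k' + c₂) →
        seqNormE d θ ψ b ≤
          ENNReal.ofReal A * (ENNReal.ofReal ((2:ℝ) ^ (c₁ - c₂)) * M) * seqNormE d θ ψ a := by
    rcases eq_or_ne θ ∞ with htop | htop
    · -- θ = ∞
      subst htop
      refine ⟨((2 * (1 - r ^ τ)⁻¹) ^ d) ^ (1/τ), ?_, ?_⟩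
      · exact ENNReal.rpow_ne_top_of_nonneg (by positivity)
          (HardyAux.Kfin d _ (ENNReal.rpow_lt_one hr1 hτ))
      · intro A hA a b ha hb hyp ψ h1 h2
        have h1' : ∀ k k' : Fin d → ℕ, (∀ i, k i ≤ k' i) →
            ψ k - ε * (∑ i, (k i : ℝ)) ≤ ψ k' - ε * (∑ i, (k' i : ℝ)) + c₁ := by
          intro k k' h; simpa only [SparseGrid.knorm1] using h1 k k' h
        have h2' : ∀ k k' : Fin d → ℕ, (∀ i, k i ≤ k' i) →
            ψ k - ζ * (∑ i, (k i : ℝ)) ≥ ψ k' - ζ * (∑ i, (k' i : ℝ)) + c₂ := by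
          intro k k' h; simpa only [SparseGrid.knorm1] using h2 k k' h
        have hX := HardyAux.keyX d τ δ ε ζ c₁ c₂ hτ hδ hε hζδ A a b ha hyp ψ h1' h2'
        have hsb : seqNormE d ⊤ ψ b = ⨆ k, ENNReal.ofReal ((2:ℝ) ^ (ψ k) * b k) := if_pos rfl
        have hsa : seqNormE d ⊤ ψ a = ⨆ k, ENNReal.ofReal ((2:ℝ) ^ (ψ k) * a k) := if_pos rfl
        rw [hsb, hsa]
        calc (⨆ k, ENNReal.ofReal ((2:ℝ) ^ (ψ k) * b k))
            ≤ ENNReal.ofReal A * ENNReal.ofReal ((2:ℝ) ^ (c₁ - c₂)) *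
                ((2 * (1 - r ^ τ)⁻¹) ^ d) ^ (1/τ) *
                ⨆ k, ENNReal.ofReal ((2:ℝ) ^ (ψ k) * a k) :=
              HardyAux.case_infty d τ hτ r _ _ _ hX
          _ = ENNReal.ofReal A *
              (ENNReal.ofReal ((2:ℝ) ^ (c₁ - c₂)) * ((2 * (1 - r ^ τ)⁻¹) ^ d) ^ (1/τ)) *
                ⨆ k, ENNReal.ofReal ((2:ℝ) ^ (ψ k) * a k) := by
              rw [mul_assoc (ENNReal.ofReal A)]
    · -- θ finite
      set t := θ.toReal with htdef
      have ht : 0 < t := ENNReal.toReal_pos hθ.ne' htop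
      rcases le_or_gt t τ with hcase | hcase
      · refine ⟨((2 * (1 - r ^ t)⁻¹) ^ d) ^ (1/t), ?_, ?_⟩
        · exact ENNReal.rpow_ne_top_of_nonneg (by positivity)
            (HardyAux.Kfin d _ (ENNReal.rpow_lt_one hr1 ht))
        · intro A hA a b ha hb hyp ψ h1 h2
          have h1' : ∀ k k' : Fin d → ℕ, (∀ i, k i ≤ k' i) →
              ψ k - ε * (∑ i, (k i : ℝ)) ≤ ψ k' - ε * (∑ i, (k' i : ℝ)) + c₁ := by
            intro k k' h; simpa only [SparseGrid.knorm1] using h1 k k' h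
          have h2' : ∀ k k' : Fin d → ℕ, (∀ i, k i ≤ k' i) →
              ψ k - ζ * (∑ i, (k i : ℝ)) ≥ ψ k' - ζ * (∑ i, (k' i : ℝ)) + c₂ := by
            intro k k' h; simpa only [SparseGrid.knorm1] using h2 k k' h
          have hX := HardyAux.keyX d τ δ ε ζ c₁ c₂ hτ hδ hε hζδ A a b ha hyp ψ h1' h2'
          have hsb : seqNormE d θ ψ b =
              (∑' k : Fin d → ℕ, ENNReal.ofReal ((2:ℝ) ^ (ψ k) * b k) ^ t) ^ (1/t) :=
            if_neg htop
          have hsa : seqNormE d θ ψ a =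
              (∑' k : Fin d → ℕ, ENNReal.ofReal ((2:ℝ) ^ (ψ k) * a k) ^ t) ^ (1/t) :=
            if_neg htop
          rw [hsb, hsa]
          calc (∑' k : Fin d → ℕ, ENNReal.ofReal ((2:ℝ) ^ (ψ k) * b k) ^ t) ^ (1/t)
              ≤ ENNReal.ofReal A * ENNReal.ofReal ((2:ℝ) ^ (c₁ - c₂)) *
                  ((2 * (1 - r ^ t)⁻¹) ^ d) ^ (1/t) *
                  (∑' k : Fin d → ℕ, ENNReal.ofReal ((2:ℝ) ^ (ψ k) * a k) ^ t) ^ (1/t) :=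
                HardyAux.case_small d τ t hτ ht hcase r _ _ _ hX
            _ = ENNReal.ofReal A *
                (ENNReal.ofReal ((2:ℝ) ^ (c₁ - c₂)) * ((2 * (1 - r ^ t)⁻¹) ^ d) ^ (1/t)) *
                  (∑' k : Fin d → ℕ, ENNReal.ofReal ((2:ℝ) ^ (ψ k) * a k) ^ t) ^ (1/t) := by
                rw [mul_assoc (ENNReal.ofReal A)]
      · have hKne : ((2 * (1 - r ^ τ)⁻¹) ^ d : ℝ≥0∞) ≠ ∞ :=
          HardyAux.Kfin d _ (ENNReal.rpow_lt_one hr1 hτ)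
        refine ⟨(((2 * (1 - r ^ τ)⁻¹) ^ d) ^ (t/τ - 1) * (2 * (1 - r ^ τ)⁻¹) ^ d) ^ (1/t),
          ?_, ?_⟩
        · refine ENNReal.rpow_ne_top_of_nonneg (by positivity) ?_
          refine ENNReal.mul_ne_top ?_ hKne
          refine ENNReal.rpow_ne_top_of_nonneg ?_ hKne
          have h1τ : (1:ℝ) < t / τ := (one_lt_div hτ).mpr hcase
          linarith
        · intro A hA a b ha hb hyp ψ h1 h2
          have h1' : ∀ k k' : Fin d → ℕ, (∀ i, k i ≤ k' i) →
              ψ k - ε * (∑ i, (k i : ℝ)) ≤ ψ k' - ε * (∑ i, (k' i : ℝ)) + c₁ := by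
            intro k k' h; simpa only [SparseGrid.knorm1] using h1 k k' h
          have h2' : ∀ k k' : Fin d → ℕ, (∀ i, k i ≤ k' i) →
              ψ k - ζ * (∑ i, (k i : ℝ)) ≥ ψ k' - ζ * (∑ i, (k' i : ℝ)) + c₂ := by
            intro k k' h; simpa only [SparseGrid.knorm1] using h2 k k' h
          have hX := HardyAux.keyX d τ δ ε ζ c₁ c₂ hτ hδ hε hζδ A a b ha hyp ψ h1' h2'
          have hsb : seqNormE d θ ψ b =
              (∑' k : Fin d → ℕ, ENNReal.ofReal ((2:ℝ) ^ (ψ k) * b k) ^ t) ^ (1/t) :=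
            if_neg htop
          have hsa : seqNormE d θ ψ a =
              (∑' k : Fin d → ℕ, ENNReal.ofReal ((2:ℝ) ^ (ψ k) * a k) ^ t) ^ (1/t) :=
            if_neg htop
          rw [hsb, hsa]
          calc (∑' k : Fin d → ℕ, ENNReal.ofReal ((2:ℝ) ^ (ψ k) * b k) ^ t) ^ (1/t)
              ≤ ENNReal.ofReal A * ENNReal.ofReal ((2:ℝ) ^ (c₁ - c₂)) *
                  (((2 * (1 - r ^ τ)⁻¹) ^ d) ^ (t/τ - 1) * (2 * (1 - r ^ τ)⁻¹) ^ d) ^ (1/t) *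
                  (∑' k : Fin d → ℕ, ENNReal.ofReal ((2:ℝ) ^ (ψ k) * a k) ^ t) ^ (1/t) :=
                HardyAux.case_big d τ t hτ ht hcase r _ _ _ hX
            _ = ENNReal.ofReal A *
                (ENNReal.ofReal ((2:ℝ) ^ (c₁ - c₂)) *
                  (((2 * (1 - r ^ τ)⁻¹) ^ d) ^ (t/τ - 1) * (2 * (1 - r ^ τ)⁻¹) ^ d) ^ (1/t)) *
                  (∑' k : Fin d → ℕ, ENNReal.ofReal ((2:ℝ) ^ (ψ k) * a k) ^ t) ^ (1/t) := by
                rw [mul_assoc (ENNReal.ofReal A)]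
  obtain ⟨M, hMne, hM⟩ := main
  have h2c : (0:ℝ) < (2:ℝ) ^ (c₁ - c₂) := Real.rpow_pos_of_pos two_pos _
  have hMt : (0:ℝ) < M.toReal + 1 := by
    have := ENNReal.toReal_nonneg (a := M); linarith
  refine ⟨(2:ℝ) ^ (c₁ - c₂) * (M.toReal + 1), mul_pos h2c hMt, ?_⟩
  intro A hA a b ha hb hyp ψ h1 h2
  refine (hM A hA a b ha hb hyp ψ h1 h2).trans ?_
  have hfac : ENNReal.ofReal ((2:ℝ) ^ (c₁ - c₂)) * M ≤
      ENNReal.ofReal ((2:ℝ) ^ (c₁ - c₂) * (M.toReal + 1)) := by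
    rw [ENNReal.ofReal_mul h2c.le]
    refine mul_le_mul_right ?_ _
    calc M = ENNReal.ofReal M.toReal := (ENNReal.ofReal_toReal hMne).symm
      _ ≤ ENNReal.ofReal (M.toReal + 1) := ENNReal.ofReal_le_ofReal (by linarith)
  calc ENNReal.ofReal A * (ENNReal.ofReal ((2:ℝ) ^ (c₁ - c₂)) * M) * seqNormE d θ ψ a
      ≤ ENNReal.ofReal A * ENNReal.ofReal ((2:ℝ) ^ (c₁ - c₂) * (M.toReal + 1)) *
          seqNormE d θ ψ a :=
        mul_le_mul_left (mul_le_mul_right hfac _) _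
    _ = ENNReal.ofReal ((2:ℝ) ^ (c₁ - c₂) * (M.toReal + 1) * A) * seqNormE d θ ψ a := by
        rw [ENNReal.ofReal_mul (mul_pos h2c hMt).le, mul_comm (ENNReal.ofReal A)]
end
end

section
/- Let 0 < p, θ, q ≤ ∞, α ∈ ℝ_+, β ∈ ℝ with β ≠ 0, and suppose 1/p < min(α, α+β) ≤ max(α, α+β) < r. Then there are constants C_1, C_2 > 0 such that for all ξ > 0: C_1 2^{ξ/ν} ≤ |G(Δ(ξ))| ≤ C_2 2^{ξ/ν} and C_1 2^{ξ/ν} ≤ Σ_{k∈Δ(ξ)} 2^{|k|_1} ≤ C_2 2^{ξ/ν}, where ν := α + β/d − (1/p − 1/q)_+ if β > 0 and ν := α + β − (1/p − 1/q)_+ if β < 0. -/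
open MeasureTheory Filter
open scoped ENNReal Classical BigOperators

noncomputable section

/-!
Both counts are comparable to `∑_{k ∈ Δ(ξ)} 2^{|k|_1}`, because `2^{k_j} ≤ 2^{k_j} + 1 ≤ 2^{k_j + 1}`,
and in every case `Δ(ξ) = {k : A|k|_1 + B|k|_∞ ≤ ξ}` with `A > 0` and `ν = A + B/d` if `B > 0`,
`ν = A + B` if `B < 0`.

The lower bound comes from a single point of `Δ(ξ)`: the diagonal point `(n,…,n)` if `B > 0`, the
axis point `(n,0,…,0)` if `B < 0`, with `n` as large as possible. For the upper bound record `k` by a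
coordinate `i` with `m := k_i = |k|_∞`. If `B > 0`, the gaps `u_j = m - k_j` satisfy
`dν m ≤ ξ + A|u|_1` and `2^{|k|_1} = 2^{dm - |u|_1}`; if `B < 0`, the other coordinates `t` satisfy
`ν m ≤ ξ - A|t|_1` and `2^{|k|_1} = 2^{m + |t|_1}`. Summing over `m` up to the cutoff gives `2^{ξ/ν}`
times a geometric series in `|u|_1` of ratio `2^{A/ν - 1} < 1`, resp. in `|t|_1` of ratio
`2^{1 - A/ν} < 1`.
-/

namespace SparseGrid

open Finset

theorem tsum_pi_fin_prod {d : ℕ} (f : Fin d → ℕ → ℝ≥0∞) :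
    ∑' t : Fin d → ℕ, ∏ i, f i (t i) = ∏ i, ∑' n, f i n := by
  induction d with
  | zero => simp
  | succ d ih =>
    rw [← (Fin.consEquiv fun _ => ℕ).tsum_eq]
    simp only [Fin.consEquiv, Equiv.coe_fn_mk, Fin.prod_univ_succ, Fin.cons_zero, Fin.cons_succ]
    rw [ENNReal.tsum_prod (f := fun (n : ℕ) (t : Fin d → ℕ) => f 0 n * ∏ i, f i.succ (t i))]
    simp [ENNReal.tsum_mul_left, ENNReal.tsum_mul_right, ih]

theorem tsum_pow_sum_fin {d : ℕ} (q : ℝ≥0∞) :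
    ∑' t : Fin d → ℕ, q ^ (∑ i, t i) = (1 - q)⁻¹ ^ d := by
  simp_rw [← Finset.prod_pow_eq_pow_sum, tsum_pi_fin_prod, ENNReal.tsum_geometric,
    prod_const, card_univ, Fintype.card_fin]

theorem tsum_ite_two_rpow_le {w : ℝ} (hw : 0 < w) (x : ℝ) :
    ∑' m : ℕ, (if (m : ℝ) ≤ x then (2 : ℝ≥0∞) ^ (w * m) else 0) ≤
      (1 - 2 ^ (-w))⁻¹ * 2 ^ (w * x) := by
  rcases lt_or_ge x 0 with hx | hx
  · have hzero : ∀ m : ℕ, ¬ (m : ℝ) ≤ x := fun m hm => (hx.trans_le' hm).not_ge m.cast_nonneg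
    simp [hzero]
  set N := ⌊x⌋₊
  set r : ℝ≥0∞ := 2 ^ (-w)
  have hterm : ∀ m : ℕ, (if (m : ℝ) ≤ x then (2 : ℝ≥0∞) ^ (w * m) else 0) ≤
      2 ^ (w * x) * if m ∈ range (N + 1) then r ^ (N - m) else 0 := by
    intro m
    split_ifs with hm hmN hmN
    · have hmN' : m ≤ N := Nat.le_floor hm
      rw [← ENNReal.rpow_natCast, ← ENNReal.rpow_mul,
        ← ENNReal.rpow_add _ _ two_ne_zero ENNReal.ofNat_ne_top, Nat.cast_sub hmN']
      gcongr
      · exact one_le_two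
      · nlinarith [Nat.floor_le hx]
    · exact absurd (mem_range.2 (Nat.lt_succ_of_le (Nat.le_floor hm))) hmN
    all_goals exact zero_le
  calc ∑' m : ℕ, (if (m : ℝ) ≤ x then (2 : ℝ≥0∞) ^ (w * m) else 0)
      ≤ ∑' m : ℕ, 2 ^ (w * x) * if m ∈ range (N + 1) then r ^ (N - m) else 0 :=
        ENNReal.tsum_le_tsum hterm
    _ = 2 ^ (w * x) * ∑ j ∈ range (N + 1), r ^ j := by
        rw [ENNReal.tsum_mul_left, tsum_eq_sum (s := range (N + 1)) (by simp_all),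
          sum_ite_mem, inter_self, ← sum_range_reflect]
        refine congrArg _ (sum_congr rfl fun j hj => ?_)
        rw [Nat.add_sub_cancel, Nat.sub_sub_self (Nat.le_of_lt_succ (mem_range.1 hj))]
    _ ≤ 2 ^ (w * x) * (1 - r)⁻¹ := by
        gcongr
        exact ENNReal.tsum_geometric r ▸ ENNReal.sum_le_tsum _
    _ = (1 - 2 ^ (-w))⁻¹ * 2 ^ (w * x) := mul_comm _ _

theorem exists_tsum_cutoff_le (d : ℕ) {w s γ : ℝ} (hw : 0 < w) (hsγ : s + w * γ < 0) :
    ∃ K ≠ ∞, ∀ x : ℝ, ∑' p : (Fin d → ℕ) × ℕ,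
      (if (p.2 : ℝ) ≤ x + γ * (∑ i, p.1 i : ℕ) then
        (2 : ℝ≥0∞) ^ (w * p.2 + s * (∑ i, p.1 i : ℕ)) else 0) ≤ K * 2 ^ (w * x) := by
  have hlt : ∀ {y : ℝ}, y < 0 → (1 - (2 : ℝ≥0∞) ^ y)⁻¹ ≠ ∞ := fun hy =>
    ENNReal.inv_ne_top.2
      (tsub_pos_of_lt (ENNReal.rpow_lt_one_of_one_lt_of_neg ENNReal.one_lt_two hy)).ne'
  refine ⟨(1 - 2 ^ (-w))⁻¹ * (1 - 2 ^ (s + w * γ))⁻¹ ^ d,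
    ENNReal.mul_ne_top (hlt (neg_neg_of_pos hw)) (ENNReal.pow_ne_top (hlt hsγ)), fun x => ?_⟩
  have hinner : ∀ t : Fin d → ℕ, ∑' m : ℕ,
      (if (m : ℝ) ≤ x + γ * (∑ i, t i : ℕ) then
        (2 : ℝ≥0∞) ^ (w * m + s * (∑ i, t i : ℕ)) else 0) ≤
      (1 - 2 ^ (-w))⁻¹ * 2 ^ (w * x) * (2 ^ (s + w * γ)) ^ (∑ i, t i) := by
    intro t
    set T : ℕ := ∑ i, t i
    have hsplit : ∀ m : ℕ, (if (m : ℝ) ≤ x + γ * T then (2 : ℝ≥0∞) ^ (w * m + s * T) else 0) =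
        2 ^ (s * T) * if (m : ℝ) ≤ x + γ * T then 2 ^ (w * m) else 0 := by
      intro m
      split_ifs
      · rw [ENNReal.rpow_add _ _ two_ne_zero ENNReal.ofNat_ne_top, mul_comm]
      · rw [mul_zero]
    have hexp : s * T + w * (x + γ * T) = w * x + (s + w * γ) * T := by ring
    calc _ = 2 ^ (s * T) * ∑' m : ℕ, if (m : ℝ) ≤ x + γ * T then (2 : ℝ≥0∞) ^ (w * m) else 0 := by
          rw [tsum_congr hsplit, ENNReal.tsum_mul_left]
      _ ≤ 2 ^ (s * T) * ((1 - 2 ^ (-w))⁻¹ * 2 ^ (w * (x + γ * T))) := by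
          gcongr
          exact tsum_ite_two_rpow_le hw _
      _ = _ := by
          rw [mul_left_comm, ← ENNReal.rpow_add _ _ two_ne_zero ENNReal.ofNat_ne_top, hexp,
            ENNReal.rpow_add _ _ two_ne_zero ENNReal.ofNat_ne_top, ENNReal.rpow_mul 2 (s + w * γ),
            ENNReal.rpow_natCast, mul_assoc]
  calc _ = ∑' t : Fin d → ℕ, ∑' m : ℕ,
        (if (m : ℝ) ≤ x + γ * (∑ i, t i : ℕ) then
          (2 : ℝ≥0∞) ^ (w * m + s * (∑ i, t i : ℕ)) else 0) := ENNReal.tsum_prod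
    _ ≤ ∑' t : Fin d → ℕ, (1 - 2 ^ (-w))⁻¹ * 2 ^ (w * x) * (2 ^ (s + w * γ)) ^ (∑ i, t i) :=
        ENNReal.tsum_le_tsum hinner
    _ = _ := by
        rw [ENNReal.tsum_mul_left, tsum_pow_sum_fin]
        ring

def mixedSublevel (d : ℕ) (A B ξ : ℝ) : Set (Fin d → ℕ) :=
  {k | A * knorm1 d k + B * knormInf d k ≤ ξ}

theorem knormInf_eq_of_forall_le {d : ℕ} {k : Fin d → ℕ} {i : Fin d} (h : ∀ j, k j ≤ k i) :
    knormInf d k = k i := by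
  rw [knormInf, le_antisymm (Finset.sup_le fun j _ => h j) (le_sup (mem_univ i))]

theorem mem_mixedSublevel_iff_of_forall_le {d : ℕ} {A B ξ : ℝ} {k : Fin d → ℕ} {i : Fin d}
    (h : ∀ j, k j ≤ k i) :
    k ∈ mixedSublevel d A B ξ ↔ A * ((∑ j, k j : ℕ) : ℝ) + B * k i ≤ ξ := by
  simp [mixedSublevel, knorm1, knormInf_eq_of_forall_le h]

theorem sum_add_sum_tsub_eq {d : ℕ} {k : Fin d → ℕ} {i : Fin d} (h : ∀ j, k j ≤ k i) :
    ∑ j, k j + ∑ j, (k i - k j) = d * k i := by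
  rw [← sum_add_distrib, sum_congr rfl fun j _ => Nat.add_sub_cancel' (h j), sum_const,
    card_univ, Fintype.card_fin, smul_eq_mul]

theorem sum_eq_add_sum_update_zero {d : ℕ} (k : Fin d → ℕ) (i : Fin d) :
    ∑ j, k j = k i + ∑ j, Function.update k i 0 j := by
  rw [sum_update_of_mem (mem_univ _), zero_add,
    ← sum_eq_add_sum_sdiff_singleton_of_mem (mem_univ _)]

theorem injective_argmax_gaps {d : ℕ} {ix : (Fin d → ℕ) → Fin d}
    (hix : ∀ (k : Fin d → ℕ) j, k j ≤ k (ix k)) :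
    Function.Injective fun k : Fin d → ℕ => (ix k, (fun j => k (ix k) - k j, k (ix k))) := by
  intro k k' h
  simp only [Prod.mk.injEq, funext_iff] at h
  obtain ⟨-, hgap, hmax⟩ := h
  ext j
  rw [← Nat.sub_sub_self (hix k j), ← Nat.sub_sub_self (hix k' j), hgap j, hmax]

theorem injective_argmax_update {d : ℕ} (ix : (Fin d → ℕ) → Fin d) :
    Function.Injective fun k : Fin d → ℕ =>
      (ix k, (Function.update k (ix k) 0, k (ix k))) := by
  intro k k' h
  simp only [Prod.mk.injEq] at h
  obtain ⟨hi, hrest, hmax⟩ := h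
  have hrec : ∀ (f : Fin d → ℕ) i, Function.update (Function.update f i 0) i (f i) = f :=
    fun f i => by rw [Function.update_idem, Function.update_eq_self]
  rw [← hrec k, ← hrec k', hrest, hmax, hi]

theorem sum2E_le_of_injective {d : ℕ} {Δ : Set (Fin d → ℕ)} {P : Type*}
    {Ψ : (Fin d → ℕ) → Fin d × P} (hΨ : Function.Injective Ψ) (g : P → ℝ≥0∞)
    (hg : ∀ k ∈ Δ, (2 : ℝ≥0∞) ^ (∑ i, k i) ≤ g (Ψ k).2) :
    sum2E d Δ ≤ d * ∑' p, g p :=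
  calc sum2E d Δ ≤ ∑' k : Δ, g (Ψ k).2 := ENNReal.tsum_le_tsum fun k => hg k k.2
    _ ≤ ∑' ip : Fin d × P, g ip.2 :=
        ENNReal.tsum_comp_le_tsum_of_injective (hΨ.comp Subtype.val_injective) fun ip => g ip.2
    _ = d * ∑' p, g p := by
        rw [ENNReal.tsum_prod (f := fun _ p => g p), tsum_fintype, sum_const, card_univ,
          Fintype.card_fin, nsmul_eq_mul]

theorem exists_sum2E_mixedSublevel_le_of_pos {d : ℕ} (hd : 0 < d) {A B : ℝ} (hA : 0 < A)
    (hB : 0 < B) :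
    ∃ K ≠ ∞, ∀ ξ, sum2E d (mixedSublevel d A B ξ) ≤ K * 2 ^ (ξ / (A + B / d)) := by
  have : Nonempty (Fin d) := ⟨⟨0, hd⟩⟩
  have hd' : (0 : ℝ) < d := Nat.cast_pos.2 hd
  set ν := A + B / d
  have hν : 0 < ν := by positivity
  have hdν : d * ν = d * A + B := by rw [mul_add, mul_div_cancel₀ _ hd'.ne']
  have hdξ : ∀ y, (d : ℝ) * (y / (d * ν)) = y / ν := fun y => by field_simp
  obtain ⟨K, hK, hcut⟩ := exists_tsum_cutoff_le d (w := d) (s := -1) (γ := A / (d * ν)) hd' (by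
    rw [hdξ, neg_add_lt_iff_lt_add, add_zero, div_lt_one hν]
    linarith [div_pos hB hd'])
  refine ⟨d * K, ENNReal.mul_ne_top (ENNReal.natCast_ne_top d) hK, fun ξ => ?_⟩
  choose ix hix using fun k : Fin d → ℕ => Finite.exists_max k
  calc sum2E d (mixedSublevel d A B ξ)
      ≤ d * ∑' p : (Fin d → ℕ) × ℕ,
          (if (p.2 : ℝ) ≤ ξ / (d * ν) + A / (d * ν) * (∑ i, p.1 i : ℕ) then
            (2 : ℝ≥0∞) ^ ((d : ℝ) * p.2 + -1 * (∑ i, p.1 i : ℕ)) else 0) := by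
        refine sum2E_le_of_injective (injective_argmax_gaps hix) _ fun k hk => le_of_eq ?_
        have hsum : ((∑ j, k j : ℕ) : ℝ) + ((∑ j, (k (ix k) - k j) : ℕ) : ℝ) = d * k (ix k) := by
          exact_mod_cast sum_add_sum_tsub_eq (hix k)
        rw [mem_mixedSublevel_iff_of_forall_le (hix k)] at hk
        have hcond : (k (ix k) : ℝ) ≤
            ξ / (d * ν) + A / (d * ν) * (∑ j, (k (ix k) - k j) : ℕ) := by
          rw [div_mul_eq_mul_div, ← add_div, le_div_iff₀ (by positivity)]
          nlinarith
        rw [if_pos hcond, ← ENNReal.rpow_natCast]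
        congr 1
        linarith
    _ ≤ d * (K * 2 ^ ((d : ℝ) * (ξ / (d * ν)))) := by
        gcongr
        exact hcut _
    _ = d * K * 2 ^ (ξ / ν) := by rw [hdξ, mul_assoc]

theorem exists_sum2E_mixedSublevel_le_of_neg {d : ℕ} (hd : 0 < d) {A B : ℝ} (hB : B < 0)
    (hν : 0 < A + B) : ∃ K ≠ ∞, ∀ ξ, sum2E d (mixedSublevel d A B ξ) ≤ K * 2 ^ (ξ / (A + B)) := by
  have : Nonempty (Fin d) := ⟨⟨0, hd⟩⟩
  set ν := A + B
  obtain ⟨K, hK, hcut⟩ := exists_tsum_cutoff_le d (w := 1) (s := 1) (γ := -A / ν) one_pos (by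
    rw [one_mul, neg_div, ← sub_eq_add_neg, sub_neg, one_lt_div hν]
    linarith)
  refine ⟨d * K, ENNReal.mul_ne_top (ENNReal.natCast_ne_top d) hK, fun ξ => ?_⟩
  choose ix hix using fun k : Fin d → ℕ => Finite.exists_max k
  calc sum2E d (mixedSublevel d A B ξ)
      ≤ d * ∑' p : (Fin d → ℕ) × ℕ,
          (if (p.2 : ℝ) ≤ ξ / ν + -A / ν * (∑ i, p.1 i : ℕ) then
            (2 : ℝ≥0∞) ^ (1 * (p.2 : ℝ) + 1 * (∑ i, p.1 i : ℕ)) else 0) := by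
        refine sum2E_le_of_injective (injective_argmax_update ix) _ fun k hk => le_of_eq ?_
        have hsum : ((∑ j, k j : ℕ) : ℝ) =
            k (ix k) + ((∑ j, Function.update k (ix k) 0 j : ℕ) : ℝ) := by
          exact_mod_cast sum_eq_add_sum_update_zero k (ix k)
        rw [mem_mixedSublevel_iff_of_forall_le (hix k)] at hk
        have hcond : (k (ix k) : ℝ) ≤
            ξ / ν + -A / ν * (∑ j, Function.update k (ix k) 0 j : ℕ) := by
          rw [div_mul_eq_mul_div, ← add_div, le_div_iff₀ hν]
          nlinarith
        rw [if_pos hcond, ← ENNReal.rpow_natCast]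
        congr 1
        linarith
    _ ≤ d * (K * 2 ^ (1 * (ξ / ν))) := by
        gcongr
        exact hcut _
    _ = d * K * 2 ^ (ξ / ν) := by rw [one_mul, mul_assoc]

theorem ofReal_le_sum2E_mixedSublevel {d : ℕ} {A B ν ξ : ℝ} {J : Finset (Fin d)}
    (hJ : J.Nonempty) (hν : 0 < ν) (hJν : #J * ν = #J * A + B) (hξ : 0 ≤ ξ) :
    ENNReal.ofReal (2 ^ (-(d : ℝ)) * 2 ^ (ξ / ν)) ≤ sum2E d (mixedSublevel d A B ξ) := by
  have hJ' : (0 : ℝ) < #J := Nat.cast_pos.2 hJ.card_pos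
  set n := ⌊ξ / (#J * ν)⌋₊
  set k : Fin d → ℕ := fun i => if i ∈ J then n else 0
  have hk1 : ∑ i, k i = #J * n := by simp [k, sum_ite_mem]
  have hkInf : knormInf d k = n := by
    obtain ⟨i, hi⟩ := hJ
    rw [knormInf_eq_of_forall_le (i := i) fun j => by simp only [k]; split_ifs <;> simp_all]
    simp [k, hi]
  have hmem : k ∈ mixedSublevel d A B ξ := by
    have hn : (n : ℝ) * (#J * ν) ≤ ξ :=
      (le_div_iff₀ (by positivity)).1 (Nat.floor_le (by positivity))
    have hk1R : ∑ i, (k i : ℝ) = #J * n := by exact_mod_cast hk1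
    simp only [mixedSublevel, Set.mem_ofPred_eq, knorm1, hkInf, hk1R]
    nlinarith
  have hexp : -(d : ℝ) + ξ / ν ≤ ((#J * n : ℕ) : ℝ) := by
    have hn : ξ / (#J * ν) < n + 1 := Nat.lt_floor_add_one _
    have hJd : (#J : ℝ) ≤ d := by exact_mod_cast (card_le_univ J).trans (Fintype.card_fin d).le
    have hξν : ξ / ν < (n + 1) * #J := by
      rw [div_lt_iff₀ (by positivity)] at hn
      rw [div_lt_iff₀ hν]
      linarith
    push_cast
    linarith
  calc ENNReal.ofReal (2 ^ (-(d : ℝ)) * 2 ^ (ξ / ν))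
      ≤ ENNReal.ofReal (2 ^ ((#J * n : ℕ) : ℝ)) := by
        rw [← Real.rpow_add two_pos]
        exact ENNReal.ofReal_le_ofReal (Real.rpow_le_rpow_of_exponent_le one_le_two hexp)
    _ = 2 ^ (∑ i, k i) := by
        rw [hk1, Real.rpow_natCast, ENNReal.ofReal_pow zero_le_two, ENNReal.ofReal_ofNat]
    _ ≤ sum2E d (mixedSublevel d A B ξ) := ENNReal.le_tsum (⟨k, hmem⟩ : mixedSublevel d A B ξ)

def IsTwoPowOrder (F : ℝ → ℝ≥0∞) (ν : ℝ) : Prop :=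
  ∃ C₁ > (0 : ℝ), ∃ C₂ > (0 : ℝ), ∀ ξ : ℝ, 0 < ξ →
    ENNReal.ofReal (C₁ * 2 ^ (ξ / ν)) ≤ F ξ ∧ F ξ ≤ ENNReal.ofReal (C₂ * 2 ^ (ξ / ν))

theorem isTwoPowOrder_of_le {F : ℝ → ℝ≥0∞} {ν C : ℝ} {K : ℝ≥0∞} (hC : 0 < C) (hK : K ≠ ∞)
    (hlow : ∀ ξ, 0 < ξ → ENNReal.ofReal (C * 2 ^ (ξ / ν)) ≤ F ξ)
    (hup : ∀ ξ, F ξ ≤ K * 2 ^ (ξ / ν)) : IsTwoPowOrder F ν := by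
  refine ⟨C, hC, K.toReal + 1, by positivity, fun ξ hξ => ⟨hlow ξ hξ, (hup ξ).trans ?_⟩⟩
  rw [ENNReal.ofReal_mul (by positivity), ← ENNReal.ofReal_rpow_of_pos two_pos,
    ENNReal.ofReal_ofNat]
  gcongr
  exact (ENNReal.le_ofReal_iff_toReal_le hK (by positivity)).2 (by linarith)

theorem isTwoPowOrder_sum2E_of_pos {d : ℕ} (hd : 0 < d) {A B : ℝ} (hA : 0 < A) (hB : 0 < B) :
    IsTwoPowOrder (fun ξ => sum2E d (mixedSublevel d A B ξ)) (A + B / d) := by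
  obtain ⟨K, hK, hup⟩ := exists_sum2E_mixedSublevel_le_of_pos hd hA hB
  have hd' : (0 : ℝ) < d := Nat.cast_pos.2 hd
  refine isTwoPowOrder_of_le (C := 2 ^ (-(d : ℝ))) (by positivity) hK (fun ξ hξ => ?_) hup
  refine ofReal_le_sum2E_mixedSublevel (J := univ) (univ_nonempty_iff.2 ⟨⟨0, hd⟩⟩)
    (by positivity) ?_ hξ.le
  rw [card_univ, Fintype.card_fin, mul_add, mul_div_cancel₀ _ hd'.ne']

theorem isTwoPowOrder_sum2E_of_neg {d : ℕ} (hd : 0 < d) {A B : ℝ} (hB : B < 0) (hν : 0 < A + B) :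
    IsTwoPowOrder (fun ξ => sum2E d (mixedSublevel d A B ξ)) (A + B) := by
  obtain ⟨K, hK, hup⟩ := exists_sum2E_mixedSublevel_le_of_neg hd hB hν
  refine isTwoPowOrder_of_le (C := 2 ^ (-(d : ℝ))) (by positivity) hK (fun ξ hξ => ?_) hup
  exact ofReal_le_sum2E_mixedSublevel (J := {⟨0, hd⟩}) (singleton_nonempty _) hν
    (by rw [card_singleton, Nat.cast_one, one_mul, one_mul]) hξ.le

theorem sum2E_le_gridSizeE {d : ℕ} (Δ : Set (Fin d → ℕ)) : sum2E d Δ ≤ gridSizeE d Δ := by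
  refine ENNReal.tsum_le_tsum fun k => ?_
  rw [← prod_pow_eq_pow_sum]
  exact prod_le_prod' fun i _ => le_self_add

theorem gridSizeE_le_two_pow_mul_sum2E {d : ℕ} (Δ : Set (Fin d → ℕ)) :
    gridSizeE d Δ ≤ 2 ^ d * sum2E d Δ := by
  rw [sum2E, gridSizeE, ← ENNReal.tsum_mul_left]
  refine ENNReal.tsum_le_tsum fun k => ?_
  calc ∏ i, ((2 : ℝ≥0∞) ^ (k : Fin d → ℕ) i + 1)
      ≤ ∏ i, 2 * (2 : ℝ≥0∞) ^ (k : Fin d → ℕ) i :=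
        prod_le_prod' fun i _ => by rw [two_mul]; gcongr; exact one_le_pow₀ one_le_two
    _ = 2 ^ d * 2 ^ (∑ i, (k : Fin d → ℕ) i) := by
        rw [prod_mul_distrib, prod_const, card_univ, Fintype.card_fin, prod_pow_eq_pow_sum]

theorem exists_bounds_of_isTwoPowOrder_sum2E {d : ℕ} {S : ℝ → Set (Fin d → ℕ)} {ν : ℝ}
    (h : IsTwoPowOrder (fun ξ => sum2E d (S ξ)) ν) :
    ∃ C₁ > (0 : ℝ), ∃ C₂ > (0 : ℝ), ∀ ξ : ℝ, 0 < ξ →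
      (ENNReal.ofReal (C₁ * 2 ^ (ξ / ν)) ≤ gridSizeE d (S ξ) ∧
        gridSizeE d (S ξ) ≤ ENNReal.ofReal (C₂ * 2 ^ (ξ / ν))) ∧
      (ENNReal.ofReal (C₁ * 2 ^ (ξ / ν)) ≤ sum2E d (S ξ) ∧
        sum2E d (S ξ) ≤ ENNReal.ofReal (C₂ * 2 ^ (ξ / ν))) := by
  obtain ⟨C₁, hC₁, C₂, hC₂, hS⟩ := h
  refine ⟨C₁, hC₁, 2 ^ d * C₂, by positivity, fun ξ hξ => ?_⟩
  obtain ⟨hlow, hup⟩ := hS ξ hξ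
  have hscale : ENNReal.ofReal (2 ^ d * C₂ * 2 ^ (ξ / ν)) =
      2 ^ d * ENNReal.ofReal (C₂ * 2 ^ (ξ / ν)) := by
    rw [mul_assoc, ENNReal.ofReal_mul (by positivity), ENNReal.ofReal_pow zero_le_two,
      ENNReal.ofReal_ofNat]
  rw [hscale]
  refine ⟨⟨hlow.trans (sum2E_le_gridSizeE _), (gridSizeE_le_two_pow_mul_sum2E _).trans ?_⟩,
    hlow, hup.trans (le_mul_of_one_le_left' (one_le_pow₀ one_le_two))⟩
  gcongr

theorem rhoPQ_lt_of_inv_lt_ofReal {p q : ℝ≥0∞} {a : ℝ} (h : p⁻¹ < ENNReal.ofReal a) :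
    rhoPQ p q < a := by
  have ha : 0 < a := ENNReal.ofReal_pos.1 (h.trans_le' zero_le)
  have hp : p⁻¹.toReal < a := ENNReal.toReal_lt_of_lt_ofReal h
  exact max_lt ha (by linarith [ENNReal.toReal_nonneg (a := q⁻¹)])

theorem exists_DeltaAB_eq_of_pos {d : ℕ} {p θ q : ℝ≥0∞} {α β ε : ℝ} (hβ : 0 < β)
    (hε0 : 0 < ε) (hε : ε < min (α - rhoPQ p q) |β|) :
    ∃ A B, 0 < A ∧ 0 < B ∧ A + B / d = α + β / d - rhoPQ p q ∧
      ∀ ξ, DeltaAB d p θ q α β ε ξ = mixedSublevel d A B ξ := by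
  rw [abs_of_pos hβ, lt_min_iff] at hε
  by_cases hA : tripleA p θ q
  · exact ⟨α - rhoPQ p q, β, by linarith, hβ, by ring, fun ξ => by rw [DeltaAB, if_pos hA]; rfl⟩
  · refine ⟨α - rhoPQ p q + ε / d, β - ε, by linarith [div_nonneg hε0.le d.cast_nonneg],
      by linarith, by ring, fun ξ => by rw [DeltaAB, if_neg hA, if_pos hβ]; rfl⟩

theorem exists_DeltaAB_eq_of_nonpos {d : ℕ} {p θ q : ℝ≥0∞} {α β ε : ℝ} (hβ : β ≤ 0)
    (hε0 : 0 < ε) (hε : ε < min (α - rhoPQ p q) |β|) :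
    ∃ A B, B < 0 ∧ A + B = α + β - rhoPQ p q ∧
      ∀ ξ, DeltaAB d p θ q α β ε ξ = mixedSublevel d A B ξ := by
  rw [abs_of_nonpos hβ, lt_min_iff] at hε
  by_cases hA : tripleA p θ q
  · exact ⟨α - rhoPQ p q, β, by linarith, by ring, fun ξ => by rw [DeltaAB, if_pos hA]; rfl⟩
  · exact ⟨α - rhoPQ p q - ε, β + ε, by linarith, by ring,
      fun ξ => by rw [DeltaAB, if_neg hA, if_neg hβ.not_gt]; rfl⟩

end SparseGrid

open SparseGrid MeasureTheory in
theorem statement13_general (d : ℕ) (hd : 0 < d) (p θ q : ℝ≥0∞) (α β : ℝ)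
    (hlow : p⁻¹ < ENNReal.ofReal (min α (α + β)))
    (ε : ℝ) (hε0 : 0 < ε) (hε : ε < min (α - rhoPQ p q) |β|) :
    ∃ C₁ > (0:ℝ), ∃ C₂ > (0:ℝ), ∀ ξ : ℝ, 0 < ξ →
      (ENNReal.ofReal (C₁ * (2:ℝ) ^
          (ξ / (if 0 < β then α + β / d - rhoPQ p q else α + β - rhoPQ p q))) ≤
        gridSizeE d (DeltaAB d p θ q α β ε ξ) ∧
      gridSizeE d (DeltaAB d p θ q α β ε ξ) ≤
        ENNReal.ofReal (C₂ * (2:ℝ) ^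
          (ξ / (if 0 < β then α + β / d - rhoPQ p q else α + β - rhoPQ p q)))) ∧
      (ENNReal.ofReal (C₁ * (2:ℝ) ^
          (ξ / (if 0 < β then α + β / d - rhoPQ p q else α + β - rhoPQ p q))) ≤
        sum2E d (DeltaAB d p θ q α β ε ξ) ∧
      sum2E d (DeltaAB d p θ q α β ε ξ) ≤
        ENNReal.ofReal (C₂ * (2:ℝ) ^
          (ξ / (if 0 < β then α + β / d - rhoPQ p q else α + β - rhoPQ p q)))) := by
  rcases lt_or_ge 0 β with hβ | hβ
  · obtain ⟨A, B, hA, hB, hν, hΔ⟩ := exists_DeltaAB_eq_of_pos (d := d) (θ := θ) hβ hε0 hε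
    simp only [if_pos hβ, hΔ, ← hν]
    exact exists_bounds_of_isTwoPowOrder_sum2E (isTwoPowOrder_sum2E_of_pos hd hA hB)
  · obtain ⟨A, B, hB, hν, hΔ⟩ := exists_DeltaAB_eq_of_nonpos (d := d) (θ := θ) hβ hε0 hε
    rw [min_eq_right (by linarith)] at hlow
    have hνpos : 0 < A + B := by
      rw [hν, sub_pos]
      exact rhoPQ_lt_of_inv_lt_ofReal hlow
    simp only [if_neg hβ.not_gt, hΔ, ← hν]
    exact exists_bounds_of_isTwoPowOrder_sum2E (isTwoPowOrder_sum2E_of_neg hd hB hνpos)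

open SparseGrid MeasureTheory in
/-- `|G(Δ(ξ))| ≍ ∑_{k ∈ Δ(ξ)} 2^{|k|_1} ≍ 2^{ξ/ν}`, where
`ν = α + β/d - (1/p-1/q)_+` if `β > 0` and `ν = α + β - (1/p-1/q)_+` if `β < 0`. -/
theorem statement13 (d r : ℕ) (hd : 0 < d) (hr : 0 < r)
    (p θ q : ℝ≥0∞) (hp : 0 < p) (hθ : 0 < θ) (hq : 0 < q)
    (α β : ℝ) (hα : 0 ≤ α) (hβ : β ≠ 0)
    (hlow : p⁻¹ < ENNReal.ofReal (min α (α + β))) (hhigh : max α (α + β) < (r : ℝ))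
    (ε : ℝ) (hε0 : 0 < ε) (hε : ε < min (α - rhoPQ p q) |β|) :
    ∃ C₁ > (0:ℝ), ∃ C₂ > (0:ℝ), ∀ ξ : ℝ, 0 < ξ →
      (ENNReal.ofReal (C₁ * (2:ℝ) ^
          (ξ / (if 0 < β then α + β / d - rhoPQ p q else α + β - rhoPQ p q))) ≤
        gridSizeE d (DeltaAB d p θ q α β ε ξ) ∧
      gridSizeE d (DeltaAB d p θ q α β ε ξ) ≤
        ENNReal.ofReal (C₂ * (2:ℝ) ^
          (ξ / (if 0 < β then α + β / d - rhoPQ p q else α + β - rhoPQ p q)))) ∧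
      (ENNReal.ofReal (C₁ * (2:ℝ) ^
          (ξ / (if 0 < β then α + β / d - rhoPQ p q else α + β - rhoPQ p q))) ≤
        sum2E d (DeltaAB d p θ q α β ε ξ) ∧
      sum2E d (DeltaAB d p θ q α β ε ξ) ≤
        ENNReal.ofReal (C₂ * (2:ℝ) ^
          (ξ / (if 0 < β then α + β / d - rhoPQ p q else α + β - rhoPQ p q)))) :=
  statement13_general d hd p θ q α β hlow ε hε0 hε
end
end

section
/- Let 0 < p, θ, q ≤ ∞ and a ∈ ℝ^d with 1/p < a_1 < a_2 ≤ … ≤ a_d < r. Then there are constants C_1, C_2 > 0 such that for all ξ > 0: C_1 2^{ξ/(a_1 − (1/p − 1/q)_+)} ≤ |G(Δ'(ξ))| ≤ C_2 2^{ξ/(a_1 − (1/p − 1/q)_+)} and the same two-sided bounds hold for Σ_{k∈Δ'(ξ)} 2^{|k|_1}. -/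
open MeasureTheory Filter
open scoped ENNReal Classical BigOperators

noncomputable section

section Statement14Aux

open SparseGrid

private lemma sum_range_pow_le (n : ℕ) : ∑ k ∈ Finset.range n, (2:ℝ≥0∞) ^ k ≤ 2 ^ n := by
  induction n with
  | zero => simp
  | succ n ih =>
    rw [Finset.sum_range_succ, pow_succ, mul_two]
    exact add_le_add ih le_rfl

private lemma geom_cut (c0 M : ℝ) (hc0 : 0 < c0) :
    ∑' k : ℕ, (if c0 * (k : ℝ) ≤ M then (2:ℝ≥0∞) ^ k else 0) ≤
      2 * (2:ℝ≥0∞) ^ (M / c0) := by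
  rcases lt_or_ge M 0 with hM | hM
  · have h0 : ∀ k : ℕ, (if c0 * (k:ℝ) ≤ M then (2:ℝ≥0∞) ^ k else 0) = 0 := by
      intro k
      rw [if_neg]
      intro h
      have hk : (0:ℝ) ≤ c0 * k := by positivity
      linarith
    simp [h0]
  · set N := ⌊M / c0⌋₊ with hN
    have hsupp : ∀ k : ℕ, k ∉ Finset.range (N + 1) →
        (if c0 * (k:ℝ) ≤ M then (2:ℝ≥0∞) ^ k else 0) = 0 := by
      intro k hk
      rw [if_neg]
      intro h
      apply hk
      rw [Finset.mem_range, Nat.lt_succ_iff, hN]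
      exact Nat.le_floor ((le_div_iff₀ hc0).2 (by linarith))
    calc ∑' k : ℕ, (if c0 * (k:ℝ) ≤ M then (2:ℝ≥0∞) ^ k else 0)
        = ∑ k ∈ Finset.range (N+1), (if c0 * (k:ℝ) ≤ M then (2:ℝ≥0∞) ^ k else 0) :=
          tsum_eq_sum hsupp
      _ ≤ ∑ k ∈ Finset.range (N+1), (2:ℝ≥0∞) ^ k :=
          Finset.sum_le_sum (fun k _ => by split <;> simp)
      _ ≤ 2 ^ (N+1) := sum_range_pow_le _
      _ = 2 * (2:ℝ≥0∞) ^ (N:ℝ) := by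
          rw [pow_succ, mul_comm, ENNReal.rpow_natCast]
      _ ≤ 2 * (2:ℝ≥0∞) ^ (M / c0) := by
          refine mul_le_mul_right ?_ 2
          exact ENNReal.rpow_le_rpow_of_exponent_le one_le_two
            (Nat.floor_le (by positivity))

private lemma tsum_pi_pow (φ : ℝ≥0∞) : ∀ m : ℕ,
    ∑' t : Fin m → ℕ, φ ^ (∑ i, t i) = (∑' n : ℕ, φ ^ n) ^ m
  | 0 => by
    rw [tsum_eq_single (fun i => i.elim0)]
    · simp
    · intro b hb; exact absurd (Subsingleton.elim b _) hb
  | (m+1) => by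
    rw [← (Fin.consEquiv (fun _ => ℕ)).tsum_eq, ENNReal.tsum_prod']
    have h1 : ∀ (a : ℕ) (t : Fin m → ℕ),
        φ ^ (∑ i, (Fin.consEquiv (fun _ => ℕ)) (a, t) i) = φ ^ a * φ ^ (∑ i, t i) := by
      intro a t
      have : (∑ i, (Fin.consEquiv (fun _ => ℕ)) (a, t) i) = a + ∑ i, t i := by
        show (∑ i, Fin.cons a t i) = a + ∑ i, t i
        rw [Fin.sum_univ_succ]; simp
      rw [this, pow_add]
    calc ∑' (a : ℕ) (t : Fin m → ℕ), φ ^ (∑ i, (Fin.consEquiv (fun _ => ℕ)) (a, t) i)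
        = ∑' (a : ℕ) (t : Fin m → ℕ), φ ^ a * φ ^ (∑ i, t i) := by
          exact tsum_congr fun a => tsum_congr fun t => h1 a t
      _ = ∑' (a : ℕ), φ ^ a * ∑' t : Fin m → ℕ, φ ^ (∑ i, t i) := by
          exact tsum_congr fun a => ENNReal.tsum_mul_left
      _ = (∑' n : ℕ, φ ^ n) * ∑' t : Fin m → ℕ, φ ^ (∑ i, t i) := ENNReal.tsum_mul_right
      _ = (∑' n : ℕ, φ ^ n) ^ (m+1) := by rw [tsum_pi_pow φ m, pow_succ]; ring

private lemma grid_le (d : ℕ) (Δ : Set (Fin d → ℕ)) :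
    sum2E d Δ ≤ gridSizeE d Δ ∧ gridSizeE d Δ ≤ 2 ^ d * sum2E d Δ := by
  constructor
  · refine ENNReal.tsum_le_tsum fun k => ?_
    rw [← Finset.prod_pow_eq_pow_sum]
    exact Finset.prod_le_prod' fun i _ => le_self_add
  · rw [gridSizeE, sum2E, ← ENNReal.tsum_mul_left]
    refine ENNReal.tsum_le_tsum fun k => ?_
    calc ∏ i, ((2:ℝ≥0∞) ^ ((k : Fin d → ℕ) i) + 1)
        ≤ ∏ i, (2 * (2:ℝ≥0∞) ^ ((k : Fin d → ℕ) i)) := by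
          refine Finset.prod_le_prod' fun i _ => ?_
          have h1 : (1:ℝ≥0∞) ≤ 2 ^ ((k : Fin d → ℕ) i) := one_le_pow_of_one_le' one_le_two _
          calc (2:ℝ≥0∞) ^ ((k:Fin d→ℕ) i) + 1
              ≤ 2 ^ ((k:Fin d→ℕ) i) + 2 ^ ((k:Fin d→ℕ) i) := add_le_add le_rfl h1
            _ = 2 * 2 ^ ((k:Fin d→ℕ) i) := (two_mul _).symm
      _ = 2 ^ d * 2 ^ (∑ i, (k : Fin d → ℕ) i) := by
          rw [Finset.prod_mul_distrib, Finset.prod_const, Finset.card_univ, Fintype.card_fin,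
            Finset.prod_pow_eq_pow_sum]

private lemma key (m : ℕ) (c : Fin (m+1) → ℝ) (δ : ℝ) (hδ : 0 < δ) (hc0 : 0 < c 0)
    (hc : ∀ i : Fin (m+1), i ≠ 0 → c 0 + δ ≤ c i) :
    ∃ K : ℝ≥0∞, K ≠ ∞ ∧ ∀ ξ : ℝ, 0 ≤ ξ →
      ENNReal.ofReal ((1/2) * (2:ℝ) ^ (ξ / c 0)) ≤
        sum2E (m+1) {k | ∑ i, c i * (k i : ℝ) ≤ ξ} ∧
      sum2E (m+1) {k | ∑ i, c i * (k i : ℝ) ≤ ξ} ≤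
        K * ENNReal.ofReal ((2:ℝ) ^ (ξ / c 0)) := by
  set θ : ℝ≥0∞ := (2:ℝ≥0∞) ^ (-(δ / c 0)) with hθdef
  have hθlt : θ < 1 := by
    have h := ENNReal.rpow_lt_rpow_of_exponent_lt (x := 2) (by norm_num) (by simp)
      (show -(δ / c 0) < 0 from neg_neg_iff_pos.mpr (by positivity))
    simpa using h
  have hgeo_ne : (1 - θ)⁻¹ ≠ ∞ := by
    rw [Ne, ENNReal.inv_eq_top, tsub_eq_zero_iff_le]
    exact fun h => absurd h (not_le.2 hθlt)
  refine ⟨2 * ((1-θ)⁻¹)^m, ENNReal.mul_ne_top (by norm_num) (ENNReal.pow_ne_top hgeo_ne),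
    fun ξ hξ => ⟨?_, ?_⟩⟩
  · -- lower bound
    set n := ⌊ξ / c 0⌋₊ with hn
    set k0 : Fin (m+1) → ℕ := fun i => if i = 0 then n else 0 with hk0
    have hmem : k0 ∈ {k : Fin (m+1) → ℕ | ∑ i, c i * (k i : ℝ) ≤ ξ} := by
      have hsum : ∑ i, c i * ((k0 i : ℕ) : ℝ) = c 0 * n := by
        simp [hk0, apply_ite (Nat.cast : ℕ → ℝ), mul_ite, Finset.sum_ite_eq']
      rw [Set.mem_setOf_eq, hsum]
      calc c 0 * n ≤ c 0 * (ξ / c 0) :=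
            mul_le_mul_of_nonneg_left (Nat.floor_le (by positivity)) hc0.le
        _ = ξ := by field_simp
    have hterm : (2:ℝ≥0∞) ^ (∑ i, k0 i) = 2 ^ n := by
      congr 1
      simp [hk0, Finset.sum_ite_eq']
    have hle : (2:ℝ≥0∞) ^ n ≤ sum2E (m+1) {k | ∑ i, c i * (k i : ℝ) ≤ ξ} := by
      rw [sum2E, ← hterm]
      exact ENNReal.le_tsum (⟨k0, hmem⟩ : {k : Fin (m+1) → ℕ | ∑ i, c i * (k i : ℝ) ≤ ξ})
    refine le_trans ?_ hle
    have hreal : (1/2) * (2:ℝ) ^ (ξ / c 0) ≤ 2 ^ n := by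
      have h1 : ξ / c 0 < n + 1 := Nat.lt_floor_add_one _
      have h2 : (2:ℝ) ^ (ξ / c 0) ≤ 2 ^ ((n:ℝ) + 1) :=
        Real.rpow_le_rpow_of_exponent_le one_le_two (by linarith)
      have h3 : (2:ℝ) ^ ((n:ℝ) + 1) = 2 * 2 ^ n := by
        rw [show ((n:ℝ) + 1) = ((n + 1 : ℕ) : ℝ) by push_cast; ring, Real.rpow_natCast,
          pow_succ]
        ring
      rw [h3] at h2
      linarith
    calc ENNReal.ofReal ((1/2) * (2:ℝ) ^ (ξ / c 0))
        ≤ ENNReal.ofReal ((2:ℝ) ^ n) := ENNReal.ofReal_le_ofReal hreal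
      _ = (2:ℝ≥0∞) ^ n := by
          rw [ENNReal.ofReal_pow (by norm_num)]
          norm_num
  · -- upper bound
    have hofreal : ENNReal.ofReal ((2:ℝ) ^ (ξ / c 0)) = (2:ℝ≥0∞) ^ (ξ / c 0) := by
      rw [← ENNReal.ofReal_rpow_of_pos (by norm_num : (0:ℝ) < 2)]
      norm_num
    rw [hofreal]
    have hsub : sum2E (m+1) {k | ∑ i, c i * (k i : ℝ) ≤ ξ}
        = ∑' k : Fin (m+1) → ℕ, Set.indicator {k : Fin (m+1) → ℕ | ∑ i, c i * (k i : ℝ) ≤ ξ}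
            (fun k => (2:ℝ≥0∞) ^ (∑ i, k i)) k := by
      rw [sum2E]
      exact tsum_subtype {k : Fin (m+1) → ℕ | ∑ i, c i * (k i : ℝ) ≤ ξ}
        (fun k => (2:ℝ≥0∞) ^ (∑ i, k i))
    rw [hsub, ← (Fin.consEquiv (fun _ => ℕ)).tsum_eq, ENNReal.tsum_prod', ENNReal.tsum_comm]
    have hpoint : ∀ (t : Fin m → ℕ) (a : ℕ),
        Set.indicator {k : Fin (m+1) → ℕ | ∑ i, c i * (k i : ℝ) ≤ ξ}
            (fun k => (2:ℝ≥0∞) ^ (∑ i, k i)) ((Fin.consEquiv (fun _ => ℕ)) (a, t))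
        = (if c 0 * (a:ℝ) ≤ ξ - ∑ i, c i.succ * (t i : ℝ) then (2:ℝ≥0∞) ^ a else 0)
            * 2 ^ (∑ i, t i) := by
      intro t a
      have happ : (Fin.consEquiv (fun _ => ℕ)) (a, t) = Fin.cons a t := rfl
      rw [happ, Set.indicator_apply]
      have hsum1 : ∑ i, c i * ((Fin.cons a t : Fin (m+1) → ℕ) i : ℝ)
          = c 0 * a + ∑ i, c i.succ * (t i : ℝ) := by
        rw [Fin.sum_univ_succ]
        simp
      have hsum2 : (∑ i, (Fin.cons a t : Fin (m+1) → ℕ) i) = a + ∑ i, t i := by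
        rw [Fin.sum_univ_succ]
        simp
      simp only [Set.mem_setOf_eq, hsum1, hsum2, pow_add]
      by_cases h : c 0 * (a:ℝ) + ∑ i, c i.succ * (t i : ℝ) ≤ ξ
      · rw [if_pos h, if_pos (by linarith)]
      · rw [if_neg h, if_neg (by intro h'; exact h (by linarith)), zero_mul]
    calc ∑' (t : Fin m → ℕ) (a : ℕ),
          Set.indicator {k : Fin (m+1) → ℕ | ∑ i, c i * (k i : ℝ) ≤ ξ}
            (fun k => (2:ℝ≥0∞) ^ (∑ i, k i)) ((Fin.consEquiv (fun _ => ℕ)) (a, t))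
        = ∑' (t : Fin m → ℕ),
            (∑' a : ℕ, (if c 0 * (a:ℝ) ≤ ξ - ∑ i, c i.succ * (t i : ℝ) then (2:ℝ≥0∞) ^ a else 0))
              * 2 ^ (∑ i, t i) := by
          refine tsum_congr fun t => ?_
          rw [← ENNReal.tsum_mul_right]
          exact tsum_congr fun a => hpoint t a
      _ ≤ ∑' (t : Fin m → ℕ),
            (2 * (2:ℝ≥0∞) ^ ((ξ - ∑ i, c i.succ * (t i : ℝ)) / c 0)) * 2 ^ (∑ i, t i) := by
          refine ENNReal.tsum_le_tsum fun t => ?_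
          exact mul_le_mul_left (geom_cut (c 0) _ hc0) _
      _ ≤ ∑' (t : Fin m → ℕ), 2 * ((2:ℝ≥0∞) ^ (ξ / c 0) * θ ^ (∑ i, t i)) := by
          refine ENNReal.tsum_le_tsum fun t => ?_
          rw [mul_assoc]
          refine mul_le_mul_right ?_ 2
          have hS : (c 0 + δ) * (∑ i, (t i : ℝ)) ≤ ∑ i, c i.succ * (t i : ℝ) := by
            rw [Finset.mul_sum]
            refine Finset.sum_le_sum fun i _ => ?_
            exact mul_le_mul_of_nonneg_right (hc i.succ (Fin.succ_ne_zero i)) (by positivity)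
          have hcast : ((∑ i, t i : ℕ) : ℝ) = ∑ i, (t i : ℝ) := by push_cast; rfl
          have hexp : (ξ - ∑ i, c i.succ * (t i : ℝ)) / c 0 + ((∑ i, t i : ℕ) : ℝ)
              ≤ ξ / c 0 + (-(δ / c 0)) * ((∑ i, t i : ℕ) : ℝ) := by
            rw [hcast]
            have hkey : (ξ - ∑ i, c i.succ * (t i : ℝ)) / c 0 + (∑ i, (t i : ℝ))
                - (ξ / c 0 + (-(δ / c 0)) * (∑ i, (t i : ℝ)))
                = ((c 0 + δ) * (∑ i, (t i : ℝ)) - ∑ i, c i.succ * (t i : ℝ)) / c 0 := by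
              field_simp
              ring
            have hnp : ((c 0 + δ) * (∑ i, (t i : ℝ)) - ∑ i, c i.succ * (t i : ℝ)) / c 0 ≤ 0 :=
              div_nonpos_iff.mpr (Or.inr ⟨by linarith, hc0.le⟩)
            linarith [hkey, hnp]
          calc (2:ℝ≥0∞) ^ ((ξ - ∑ i, c i.succ * (t i : ℝ)) / c 0) * 2 ^ (∑ i, t i)
              = (2:ℝ≥0∞) ^ ((ξ - ∑ i, c i.succ * (t i : ℝ)) / c 0 + ((∑ i, t i : ℕ) : ℝ)) := by
                rw [ENNReal.rpow_add _ _ (by norm_num) (by norm_num), ENNReal.rpow_natCast]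
            _ ≤ (2:ℝ≥0∞) ^ (ξ / c 0 + (-(δ / c 0)) * ((∑ i, t i : ℕ) : ℝ)) :=
                ENNReal.rpow_le_rpow_of_exponent_le one_le_two hexp
            _ = (2:ℝ≥0∞) ^ (ξ / c 0) * θ ^ (∑ i, t i) := by
                rw [ENNReal.rpow_add _ _ (by norm_num) (by norm_num), ENNReal.rpow_mul,
                  ← hθdef, ENNReal.rpow_natCast]
      _ = 2 * (2:ℝ≥0∞) ^ (ξ / c 0) * ∑' (t : Fin m → ℕ), θ ^ (∑ i, t i) := by
          simp_rw [← mul_assoc]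
          rw [ENNReal.tsum_mul_left]
      _ = 2 * ((1-θ)⁻¹)^m * (2:ℝ≥0∞) ^ (ξ / c 0) := by
          rw [tsum_pi_pow, ENNReal.tsum_geometric]
          ring

end Statement14Aux

open SparseGrid MeasureTheory in
/-- `|G(Δ'(ξ))| ≍ ∑_{k ∈ Δ'(ξ)} 2^{|k|_1} ≍ 2^{ξ/(a_1 - (1/p-1/q)_+)}`. -/
theorem statement14 (d r : ℕ) (hd : 2 ≤ d) (hr : 0 < r)
    (p θ q : ℝ≥0∞) (hp : 0 < p) (hθ : 0 < θ) (hq : 0 < q)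
    (a : Fin d → ℝ)
    (hlow : p⁻¹ < ENNReal.ofReal (a ⟨0, by omega⟩))
    (h12 : a ⟨0, by omega⟩ < a ⟨1, by omega⟩)
    (hmono : ∀ i j : Fin d, 1 ≤ (i : ℕ) → i ≤ j → a i ≤ a j)
    (hhigh : ∀ i, a i < (r : ℝ))
    (ε : ℝ) (hε0 : 0 < ε) (hε : ε < a ⟨1, by omega⟩ - a ⟨0, by omega⟩) :
    ∃ C₁ > (0:ℝ), ∃ C₂ > (0:ℝ), ∀ ξ : ℝ, 0 < ξ →
      (ENNReal.ofReal (C₁ * (2:ℝ) ^ (ξ / (a ⟨0, by omega⟩ - rhoPQ p q))) ≤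
        gridSizeE d (DeltaA d p θ q a ε ξ) ∧
      gridSizeE d (DeltaA d p θ q a ε ξ) ≤
        ENNReal.ofReal (C₂ * (2:ℝ) ^ (ξ / (a ⟨0, by omega⟩ - rhoPQ p q)))) ∧
      (ENNReal.ofReal (C₁ * (2:ℝ) ^ (ξ / (a ⟨0, by omega⟩ - rhoPQ p q))) ≤
        sum2E d (DeltaA d p θ q a ε ξ) ∧
      sum2E d (DeltaA d p θ q a ε ξ) ≤
        ENNReal.ofReal (C₂ * (2:ℝ) ^ (ξ / (a ⟨0, by omega⟩ - rhoPQ p q)))) := by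
  obtain ⟨m, rfl⟩ : ∃ m, d = m + 2 := ⟨d - 2, by omega⟩
  have h0 : (⟨0, by omega⟩ : Fin (m+2)) = 0 := by ext; simp
  have h1i : (⟨1, by omega⟩ : Fin (m+2)) = 1 := by ext; simp [Fin.val_one]
  simp only [h0, h1i] at hlow h12 hε ⊢
  have hρ0 : (0:ℝ) ≤ rhoPQ p q := le_max_left _ _
  have hpne : p⁻¹ ≠ ⊤ := hlow.ne_top
  have htr : p⁻¹.toReal < a 0 := (ENNReal.lt_ofReal_iff_toReal_lt hpne).1 hlow
  have hρlt : rhoPQ p q < a 0 := by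
    have h0p : 0 ≤ p⁻¹.toReal := ENNReal.toReal_nonneg
    have h0q : 0 ≤ q⁻¹.toReal := ENNReal.toReal_nonneg
    exact max_lt (by linarith) (by linarith)
  have hai : ∀ i : Fin (m+2), i ≠ 0 → a 1 ≤ a i := by
    intro i hi
    have hvi : 1 ≤ (i : ℕ) := by
      rcases Nat.eq_zero_or_pos (i : ℕ) with h | h
      · exact absurd (Fin.ext (by simp [h])) hi
      · omega
    exact hmono 1 i (by simp [Fin.val_one]) (by rw [Fin.le_def, Fin.val_one]; exact hvi)
  set δ : ℝ := a 1 - a 0 - ε with hδdef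
  have hδ : 0 < δ := by rw [hδdef]; linarith
  have hmain : ∃ c : Fin (m+2) → ℝ, c 0 = a 0 - rhoPQ p q ∧
      (∀ ξ : ℝ, DeltaA (m+2) p θ q a ε ξ = {k | ∑ i, c i * ((k i : ℕ) : ℝ) ≤ ξ}) ∧
      (∀ i : Fin (m+2), i ≠ 0 → c 0 + δ ≤ c i) := by
    by_cases hA : tripleA p θ q
    · refine ⟨fun i => a i - rhoPQ p q, rfl, fun ξ => ?_, fun i hi => ?_⟩
      · rw [DeltaA, if_pos hA]
        ext k
        simp [knorm1, sub_mul, Finset.sum_sub_distrib, Finset.mul_sum]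
      · have := hai i hi
        simp only [hδdef]
        linarith
    · refine ⟨fun i => (if (i : ℕ) = 0 then a i else a i - ε) - rhoPQ p q, by simp,
        fun ξ => ?_, fun i hi => ?_⟩
      · rw [DeltaA, if_neg hA]
        ext k
        simp [knorm1, sub_mul, Finset.sum_sub_distrib, Finset.mul_sum]
      · have hvi : (i : ℕ) ≠ 0 := by
          intro h
          exact hi (Fin.ext (by simp [h]))
        have := hai i hi
        simp [hvi]
        linarith
  obtain ⟨c, hc0eq, hset, hcbig⟩ := hmain
  have hc0pos : 0 < c 0 := by rw [hc0eq]; linarith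
  obtain ⟨K, hKne, hK⟩ := key (m+1) c δ hδ hc0pos hcbig
  refine ⟨1/2, by norm_num, 2^(m+2) * (K.toReal + 1), by positivity, fun ξ hξ => ?_⟩
  obtain ⟨hLb, hUb⟩ := hK ξ hξ.le
  rw [← hc0eq, hset ξ]
  obtain ⟨hg1, hg2⟩ := grid_le (m+2) {k : Fin (m+2) → ℕ | ∑ i, c i * ((k i : ℕ) : ℝ) ≤ ξ}
  have hX : (0:ℝ) < 2 ^ (ξ / c 0) := by positivity
  have hKt : (0:ℝ) ≤ K.toReal := ENNReal.toReal_nonneg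
  have hpow1 : (1:ℝ) ≤ 2 ^ (m+2) := one_le_pow₀ one_le_two
  have hpow0 : (0:ℝ) < 2 ^ (m+2) := by positivity
  refine ⟨⟨hLb.trans hg1, ?_⟩, hLb, ?_⟩
  · calc gridSizeE (m+2) {k : Fin (m+2) → ℕ | ∑ i, c i * ((k i : ℕ) : ℝ) ≤ ξ}
        ≤ 2^(m+2) * sum2E (m+2) {k : Fin (m+2) → ℕ | ∑ i, c i * ((k i : ℕ) : ℝ) ≤ ξ} := hg2
      _ ≤ 2^(m+2) * (K * ENNReal.ofReal ((2:ℝ) ^ (ξ / c 0))) := mul_le_mul_right hUb _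
      _ = ENNReal.ofReal ((2:ℝ)^(m+2) * (K.toReal * 2 ^ (ξ / c 0))) := by
          rw [ENNReal.ofReal_mul (by positivity), ENNReal.ofReal_mul hKt,
            ENNReal.ofReal_toReal hKne, ENNReal.ofReal_pow (by norm_num)]
          norm_num
      _ ≤ ENNReal.ofReal ((2^(m+2) * (K.toReal + 1)) * 2 ^ (ξ / c 0)) := by
          apply ENNReal.ofReal_le_ofReal
          nlinarith [mul_pos hpow0 hX, mul_nonneg hKt hX.le]
  · calc sum2E (m+2) {k : Fin (m+2) → ℕ | ∑ i, c i * ((k i : ℕ) : ℝ) ≤ ξ}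
        ≤ K * ENNReal.ofReal ((2:ℝ) ^ (ξ / c 0)) := hUb
      _ = ENNReal.ofReal (K.toReal * 2 ^ (ξ / c 0)) := by
          rw [ENNReal.ofReal_mul hKt, ENNReal.ofReal_toReal hKne]
      _ ≤ ENNReal.ofReal ((2^(m+2) * (K.toReal + 1)) * 2 ^ (ξ / c 0)) := by
          apply ENNReal.ofReal_le_ofReal
          nlinarith [mul_pos hpow0 hX, mul_nonneg (mul_nonneg (sub_nonneg.mpr hpow1) hKt) hX.le]
end
end
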